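/- arXiv:2504.04690 — 10 statements merged into one kernel-verified Lean document; each statement's English description precedes it below -/
import Mathlib

section
/- Assume ∫_τ^∞ ds/r(s) = ∞. Let x be a solution of (E) and let M ≥ τ be such that x(t) ≥ 0 for all t ≥ M. Then there exists N ∈ ℕ such that x′(t_k) ≥ 0 for all k ≥ N. -/
/-!
Choose `N` with `t N ≥ M`. For `j ≥ N` the delayed value `x (ζ j)` is nonnegative, so
`(r x')' = -f(s, x (ζ j)) ≤ 0` on `(t j, t (j+1))`, and `r x'` is nonincreasing on `[t N, ∞)`.
If `x' (t k) < 0` for some `k ≥ N`, then `x' ≤ c / r` on `[t k, ∞)` with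
`c = r (t k) x' (t k) < 0`, hence `x T ≤ x (t k) + c ∫_{t k}^T ds / r(s) → -∞`,
contradicting `x ≥ 0` on `[M, ∞)`.
-/

open MeasureTheory Set Filter Topology

theorem nonneg_of_continuous_of_mul_pos {φ : ℝ → ℝ} (hφ : Continuous φ)
    (hpos : ∀ y, y ≠ 0 → 0 < y * φ y) {y : ℝ} (hy : 0 ≤ y) : 0 ≤ φ y := by
  have hIoi : Ioi 0 ⊆ {y | 0 ≤ φ y} := fun y hy =>
    (pos_of_mul_pos_right (hpos y (ne_of_gt hy)) (le_of_lt hy)).le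
  have hIci := (isClosed_le continuous_const hφ).closure_subset_iff.mpr hIoi
  rw [closure_Ioi] at hIci
  exact hIci hy

theorem antitoneOn_Icc_of_hasDerivAt_neg {w φ : ℝ → ℝ} {a b : ℝ}
    (hw : ContinuousOn w (Icc a b)) (hderiv : ∀ s ∈ Ioo a b, HasDerivAt w (-φ s) s)
    (hφ : ∀ s ∈ Ioo a b, 0 ≤ φ s) : AntitoneOn w (Icc a b) :=
  antitoneOn_of_hasDerivWithinAt_nonpos (convex_Icc a b) hw
    (by simpa using fun s hs => (hderiv s hs).hasDerivWithinAt)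
    (by simpa using hφ)

theorem antitoneOn_Ici_of_antitoneOn_Icc_succ {α β : Type*} [LinearOrder α] [Preorder β]
    {t : ℕ → α} (ht : Monotone t) (ht_top : Tendsto t atTop atTop) {w : α → β} {N : ℕ}
    (hw : ∀ j, N ≤ j → AntitoneOn w (Icc (t j) (t (j + 1)))) : AntitoneOn w (Ici (t N)) := by
  have hfin : ∀ m, AntitoneOn w (Icc (t N) (t (N + m))) := by
    intro m
    induction m with
    | zero => simp
    | succ m ih =>
      have hle : t N ≤ t (N + m) := ht (Nat.le_add_right N m)
      have hle' : t (N + m) ≤ t (N + m + 1) := ht (Nat.le_succ _)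
      rw [← add_assoc, ← Icc_union_Icc_eq_Icc hle hle']
      exact ih.union_right (hw _ (Nat.le_add_right N m)) (isGreatest_Icc hle) (isLeast_Icc hle')
  intro a ha b hb hab
  obtain ⟨m, hm⟩ := eventually_atTop.mp (ht_top.eventually_ge_atTop b)
  have hbm : b ≤ t (N + m) := hm _ (Nat.le_add_left m N)
  exact hfin m ⟨ha, hab.trans hbm⟩ ⟨ha.trans hab, hbm⟩ hab

theorem tendsto_intervalIntegral_atTop_of_lintegral_eq_top {g : ℝ → ℝ} {a b : ℝ}
    (hg : ContinuousOn g (Ici a)) (hg0 : ∀ s ∈ Ici a, 0 ≤ g s)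
    (htop : ∫⁻ s in Ioi a, ENNReal.ofReal (g s) = ⊤) (hab : a ≤ b) :
    Tendsto (fun T => ∫ s in b..T, g s) atTop atTop := by
  have hint : ∀ T, IntegrableOn g (Ioc a T) := fun T =>
    (hg.mono Icc_subset_Ici_self).integrableOn_Icc.mono_set Ioc_subset_Icc_self
  have htop_b : ∫⁻ s in Ioi b, ENNReal.ofReal (g s) = ⊤ := by
    have hfin : ∫⁻ s in Ioc a b, ENNReal.ofReal (g s) ≠ ⊤ :=
      ((lintegral_ofReal_le_lintegral_enorm _).trans_lt (hint b).2).ne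
    rw [← Ioc_union_Ioi_eq_Ioi hab, lintegral_union measurableSet_Ioi (Ioc_disjoint_Ioi le_rfl),
      ENNReal.add_eq_top] at htop
    exact htop.resolve_left hfin
  have hlim : Tendsto (fun T => ∫⁻ s in Ioc b T, ENNReal.ofReal (g s)) atTop (𝓝 ⊤) := by
    have hmeas : AEMeasurable (fun s => ENNReal.ofReal (g s)) (volume.restrict (Ioi b)) :=
      ((hg.mono (Ioi_subset_Ici hab)).aemeasurable measurableSet_Ioi).ennreal_ofReal
    have := (aecover_Iic (μ := volume.restrict (Ioi b)) tendsto_id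
      ).lintegral_tendsto_of_countably_generated hmeas
    simpa [Measure.restrict_restrict measurableSet_Iic, Iic_inter_Ioi, htop_b] using this
  rw [← ENNReal.tendsto_ofReal_nhds_top]
  refine hlim.congr' ?_
  filter_upwards [eventually_ge_atTop b] with T hT
  have hnonneg : 0 ≤ᵐ[volume.restrict (Ioc b T)] g := by
    filter_upwards [ae_restrict_mem measurableSet_Ioc] with s hs using hg0 s (hab.trans hs.1.le)
  rw [intervalIntegral.integral_of_le hT, ofReal_integral_eq_lintegral_ofReal
    ((hint T).mono_set (Ioc_subset_Ioc_left hab)) hnonneg]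

theorem tendsto_atBot_of_hasDerivAt_le_mul {x x' g : ℝ → ℝ} {b c : ℝ} (hc : c < 0)
    (hx : ∀ s ∈ Ici b, HasDerivAt x (x' s) s) (hg : ContinuousOn g (Ici b))
    (hle : ∀ s ∈ Ici b, x' s ≤ c * g s)
    (hdiv : Tendsto (fun T => ∫ s in b..T, g s) atTop atTop) : Tendsto x atTop atBot := by
  have hx_le : ∀ T, b ≤ T → x T ≤ x b + c * ∫ s in b..T, g s := by
    intro T hT
    have hcont : ContinuousOn x (Icc b T) := fun s hs =>
      (hx s hs.1).continuousAt.continuousWithinAt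
    have := intervalIntegral.sub_le_integral_of_hasDeriv_right_of_le hT hcont
      (fun s hs => (hx s hs.1.le).hasDerivWithinAt)
      ((hg.mono Icc_subset_Ici_self).integrableOn_Icc.const_mul c) (fun s hs => hle s hs.1.le)
    rw [intervalIntegral.integral_const_mul] at this
    linarith
  exact tendsto_atBot_mono' _ ((eventually_ge_atTop b).mono hx_le)
    (tendsto_atBot_add_const_left _ _ (hdiv.const_mul_atTop_of_neg hc))

theorem stmt0_general
    (t ζ : ℕ → ℝ) (ht_mono : StrictMono t)
    (ht_top : Tendsto t atTop atTop)
    (hζ : ∀ k : ℕ, ζ k ∈ Icc (t k) (t (k+1)))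
    (r : ℝ → ℝ) (hr_cont : ContinuousOn r (Ici (t 0)))
    (hr_pos : ∀ s ∈ Ici (t 0), 0 < r s)
    (f : ℝ → ℝ → ℝ)
    (hf_cont : ContinuousOn (fun q : ℝ × ℝ => f q.1 q.2) ((Ici (t 0)) ×ˢ (univ : Set ℝ)))
    (hf_sign : ∀ s ∈ Ici (t 0), ∀ y : ℝ, y ≠ 0 → 0 < y * f s y)
    (x x' : ℝ → ℝ)
    (hx_deriv : ∀ s ∈ Ici (t 0), HasDerivAt x (x' s) s)
    (hx'_cont : ContinuousOn x' (Ici (t 0)))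
    (hE : ∀ k : ℕ, ∀ s ∈ Ioo (t k) (t (k+1)),
      HasDerivAt (fun u => r u * x' u) (-(f s (x (ζ k)))) s)
    (hr_int : ∫⁻ s in Ioi (t 0), ENNReal.ofReal (1 / r s) = ⊤)
    (M : ℝ) (hxM : ∀ s : ℝ, M ≤ s → 0 ≤ x s) :
    ∃ N : ℕ, ∀ k : ℕ, N ≤ k → 0 ≤ x' (t k) := by
  obtain ⟨N, hN⟩ := eventually_atTop.mp (ht_top.eventually_ge_atTop M)
  refine ⟨N, fun k hk => ?_⟩
  by_contra! hneg
  have ht0 : ∀ j, Ici (t j) ⊆ Ici (t 0) := fun j =>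
    Ici_subset_Ici.mpr (ht_mono.monotone j.zero_le)
  have hf_nonneg : ∀ s ∈ Ici (t 0), ∀ y, 0 ≤ y → 0 ≤ f s y := fun s hs _ =>
    nonneg_of_continuous_of_mul_pos (hf_cont.comp_continuous (continuous_const.prodMk continuous_id)
      fun _ => ⟨hs, mem_univ _⟩) (hf_sign s hs)
  have hw_cont : ContinuousOn (fun u => r u * x' u) (Ici (t 0)) := hr_cont.mul hx'_cont
  have hw_anti : AntitoneOn (fun u => r u * x' u) (Ici (t k)) :=
    antitoneOn_Ici_of_antitoneOn_Icc_succ ht_mono.monotone ht_top fun j hj =>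
      antitoneOn_Icc_of_hasDerivAt_neg (hw_cont.mono (Icc_subset_Ici_self.trans (ht0 j))) (hE j)
        fun s hs => hf_nonneg s (ht0 j hs.1.le) _ (hxM _ ((hN j (hk.trans hj)).trans (hζ j).1))
  have hrk : 0 < r (t k) := hr_pos _ (ht0 k self_mem_Ici)
  have hx'_le : ∀ s ∈ Ici (t k), x' s ≤ r (t k) * x' (t k) * (1 / r s) := fun s hs => by
    rw [mul_one_div, le_div_iff₀ (hr_pos s (ht0 k hs)), mul_comm]
    exact hw_anti self_mem_Ici hs hs
  have hr_inv_cont : ContinuousOn (fun s => 1 / r s) (Ici (t 0)) :=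
    continuousOn_const.div hr_cont fun s hs => (hr_pos s hs).ne'
  have hdiv := tendsto_intervalIntegral_atTop_of_lintegral_eq_top hr_inv_cont
    (fun s hs => (one_div_pos.mpr (hr_pos s hs)).le) hr_int (ht_mono.monotone k.zero_le)
  have hx_bot := tendsto_atBot_of_hasDerivAt_le_mul (mul_neg_of_pos_of_neg hrk hneg)
    (fun s hs => hx_deriv s (ht0 k hs)) (hr_inv_cont.mono (ht0 k)) hx'_le hdiv
  obtain ⟨s, hs_neg, hs_ge⟩ :=
    ((hx_bot.eventually_lt_atBot 0).and (eventually_ge_atTop M)).exists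
  exact (hxM s hs_ge).not_gt hs_neg

theorem stmt0
    (t ζ : ℕ → ℝ) (ht_mono : StrictMono t)
    (ht_top : Tendsto t atTop atTop)
    (hζ : ∀ k : ℕ, ζ k ∈ Icc (t k) (t (k+1)))
    (r : ℝ → ℝ) (hr_cont : ContinuousOn r (Ici (t 0)))
    (hr_pos : ∀ s ∈ Ici (t 0), 0 < r s)
    (f : ℝ → ℝ → ℝ)
    (hf_cont : ContinuousOn (fun q : ℝ × ℝ => f q.1 q.2) ((Ici (t 0)) ×ˢ (univ : Set ℝ)))
    (hf_sign : ∀ s ∈ Ici (t 0), ∀ y : ℝ, y ≠ 0 → 0 < y * f s y)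
    (x x' : ℝ → ℝ)
    (hx_deriv : ∀ s ∈ Ici (t 0), HasDerivAt x (x' s) s)
    (hx'_cont : ContinuousOn x' (Ici (t 0)))
    (hE : ∀ k : ℕ, ∀ s ∈ Ioo (t k) (t (k+1)),
      HasDerivAt (fun u => r u * x' u) (-(f s (x (ζ k)))) s)
    (hr_int : ∫⁻ s in Ioi (t 0), ENNReal.ofReal (1 / r s) = ⊤)
    (M : ℝ) (hM : t 0 ≤ M) (hxM : ∀ s : ℝ, M ≤ s → 0 ≤ x s) :
    ∃ N : ℕ, ∀ k : ℕ, N ≤ k → 0 ≤ x' (t k) :=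
  stmt0_general t ζ ht_mono ht_top hζ r hr_cont hr_pos f hf_cont hf_sign x x' hx_deriv hx'_cont hE
    hr_int M hxM
end

section
/- Assume ∫_τ^∞ ds/r(s) = ∞ and ∫_τ^∞ p(s) ds = ∞. Then every solution x of (E) is oscillatory. -/
open MeasureTheory Set Filter

/-! Suppose `x > 0` on a tail `[t K, ∞)`. On each `(t k, t (k + 1))` with `k ≥ K` we have
`(r x')' = -f(s, x(ζ k)) ≤ -p(s) φ(x(ζ k)) ≤ 0`, and `r x'` is continuous at the breakpoints,
so `r x'` is nonincreasing on the tail. If `r x'` stayed nonnegative, `x` would be nondecreasing,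
hence `φ(x(ζ k)) ≥ c := φ(x(t K)) > 0` and `r x' + c ∫ p` would be nonincreasing, which is
impossible since `∫ p = ∞`. So `r x' ≤ -δ < 0` from some `v₀` on, whence
`x(v) ≤ x(v₀) - δ ∫_{v₀}^v 1/r → -∞`, contradicting `∫ 1/r = ∞`. The case `x < 0` on a tail
reduces to this one through `x ↦ -x`, `f(s, y) ↦ -f(s, -y)`, `φ(y) ↦ -φ(-y)`. -/

section Gluing

variable {α β : Type*} [LinearOrder α] [Preorder β] {f : α → β} {t : ℕ → α} {K : ℕ}

theorem antitoneOn_Icc_of_antitoneOn_Icc_succ (ht : Monotone t)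
    (hf : ∀ k ≥ K, AntitoneOn f (Icc (t k) (t (k + 1)))) {n : ℕ} (hn : K ≤ n) :
    AntitoneOn f (Icc (t K) (t n)) := by
  induction n, hn using Nat.le_induction with
  | base => exact Subsingleton.antitoneOn f (subsingleton_Icc_of_ge le_rfl)
  | succ n hKn ih =>
    rw [← Icc_union_Icc_eq_Icc (ht hKn) (ht n.le_succ)]
    exact ih.union_right (hf n hKn) (isGreatest_Icc (ht hKn)) (isLeast_Icc (ht n.le_succ))

theorem antitoneOn_Ici_of_antitoneOn_Icc_succ_s1 (ht : Monotone t) (htop : Tendsto t atTop atTop)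
    (hf : ∀ k ≥ K, AntitoneOn f (Icc (t k) (t (k + 1)))) : AntitoneOn f (Ici (t K)) := by
  intro u hu v hv huv
  obtain ⟨n, hKn, hvn⟩ := ((eventually_ge_atTop K).and (htop.eventually_ge_atTop v)).exists
  exact antitoneOn_Icc_of_antitoneOn_Icc_succ ht hf hKn ⟨hu, huv.trans hvn⟩ ⟨hv, hvn⟩ huv

end Gluing

theorem antitoneOn_Ici_of_hasDerivAt_nonpos_of_mem_Ioo {t : ℕ → ℝ} {K : ℕ} {h : ℝ → ℝ}
    (ht : Monotone t) (htop : Tendsto t atTop atTop) (hc : ContinuousOn h (Ici (t K)))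
    (hd : ∀ k ≥ K, ∀ s ∈ Ioo (t k) (t (k + 1)), ∃ d ≤ 0, HasDerivAt h d s) :
    AntitoneOn h (Ici (t K)) := by
  refine antitoneOn_Ici_of_antitoneOn_Icc_succ_s1 ht htop fun k hk => ?_
  have hsub : Icc (t k) (t (k + 1)) ⊆ Ici (t K) := fun s hs => (ht hk).trans hs.1
  refine antitoneOn_of_deriv_nonpos (convex_Icc _ _) (hc.mono hsub) ?_ ?_ <;>
    rw [interior_Icc] <;> intro s hs <;> obtain ⟨d, hd0, hds⟩ := hd k hk s hs
  · exact hds.differentiableAt.differentiableWithinAt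
  · exact hds.deriv ▸ hd0

section Primitive

variable {q : ℝ → ℝ} {a : ℝ}

theorem ContinuousOn.intervalIntegrable_of_Ici (hq : ContinuousOn q (Ici a)) {u v : ℝ}
    (hu : a ≤ u) (hv : a ≤ v) : IntervalIntegrable q volume u v :=
  (hq.mono fun _ hs => (le_min hu hv).trans hs.1).intervalIntegrable

theorem ContinuousOn.hasDerivAt_integral_of_Ici (hq : ContinuousOn q (Ici a)) {s : ℝ}
    (hs : a < s) : HasDerivAt (fun v => ∫ u in a..v, q u) (q s) s :=
  intervalIntegral.integral_hasDerivAt_right (hq.intervalIntegrable_of_Ici le_rfl hs.le)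
    ((hq.mono Ioi_subset_Ici_self).stronglyMeasurableAtFilter isOpen_Ioi s hs)
    (hq.continuousAt (Ici_mem_nhds hs))

theorem tendsto_integral_atTop_of_lintegral_Ioi_eq_top (hq : ContinuousOn q (Ici a))
    (hq0 : ∀ s ∈ Ici a, 0 ≤ q s) (hI : ∫⁻ s in Ioi a, ENNReal.ofReal (q s) = ⊤)
    {b : ℝ} (hab : a ≤ b) : Tendsto (fun v => ∫ s in b..v, q s) atTop atTop := by
  have hmono : MonotoneOn (fun v => ∫ s in b..v, q s) (Ici b) := fun u hu v _ huv =>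
    intervalIntegral.integral_mono_interval le_rfl hu huv
      ((ae_restrict_iff' measurableSet_Ioc).2 (Eventually.of_forall fun s hs =>
        hq0 s (hab.trans hs.1.le)))
      (hq.intervalIntegrable_of_Ici hab (hab.trans (hu.trans huv)))
  suffices hunb : ∀ M : ℝ, ∃ v ≥ b, M ≤ ∫ s in b..v, q s by
    refine tendsto_atTop.2 fun M => ?_
    obtain ⟨v, hbv, hMv⟩ := hunb M
    filter_upwards [eventually_ge_atTop v] with w hvw
    exact hMv.trans (hmono hbv (hbv.trans hvw) hvw)
  by_contra! hbdd
  obtain ⟨M, hM⟩ := hbdd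
  have hIoi : IntegrableOn q (Ioi b) := by
    refine integrableOn_Ioi_of_intervalIntegral_norm_bounded M b
      (fun v => ((hq.mono fun s hs => hab.trans hs.1).integrableOn_Icc).mono_set
        Ioc_subset_Icc_self) tendsto_id ?_
    filter_upwards [eventually_ge_atTop b] with v hbv
    rw [intervalIntegral.integral_congr fun s hs =>
      Real.norm_of_nonneg (hq0 s (hab.trans (uIcc_of_le hbv ▸ hs).1))]
    exact (hM v hbv).le
  have hIoc : IntegrableOn q (Ioc a b) :=
    ((hq.mono Icc_subset_Ici_self).integrableOn_Icc).mono_set Ioc_subset_Icc_self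
  have := (hIoc.union hIoi)
  rw [Ioc_union_Ioi_eq_Ioi hab] at this
  exact this.lintegral_lt_top.ne hI

end Primitive

theorem tendsto_atBot_of_mul_deriv_le_neg {r x x' : ℝ → ℝ} {a c : ℝ} (hc : c < 0)
    (hr : ContinuousOn r (Ici a)) (hr_pos : ∀ s ∈ Ici a, 0 < r s)
    (hR : Tendsto (fun v => ∫ s in a..v, 1 / r s) atTop atTop)
    (hx : ∀ s ∈ Ici a, HasDerivAt x (x' s) s) (hx' : ContinuousOn x' (Ici a))
    (hle : ∀ s ∈ Ici a, r s * x' s ≤ c) : Tendsto x atTop atBot := by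
  have hrinv : ContinuousOn (fun s => 1 / r s) (Ici a) :=
    continuousOn_const.div hr fun s hs => (hr_pos s hs).ne'
  have hbound : ∀ v ≥ a, x v ≤ x a + c * ∫ s in a..v, 1 / r s := by
    intro v hav
    have hftc : ∫ s in a..v, x' s = x v - x a :=
      intervalIntegral.integral_eq_sub_of_hasDerivAt
        (fun s hs => hx s (uIcc_of_le hav ▸ hs).1)
        (hx'.intervalIntegrable_of_Ici le_rfl hav)
    have hcmp : ∫ s in a..v, x' s ≤ ∫ s in a..v, c * (1 / r s) :=
      intervalIntegral.integral_mono_on hav (hx'.intervalIntegrable_of_Ici le_rfl hav)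
        ((hrinv.intervalIntegrable_of_Ici le_rfl hav).const_mul c) fun s hs => by
          rw [mul_one_div, le_div_iff₀ (hr_pos s hs.1), mul_comm]
          exact hle s hs.1
    rw [intervalIntegral.integral_const_mul] at hcmp
    linarith
  refine tendsto_atBot_mono' atTop ?_
    (tendsto_atBot_add_const_left _ (x a) (hR.const_mul_atTop_of_neg hc))
  filter_upwards [eventually_ge_atTop a] with v hv using hbound v hv

theorem exists_lt_zero_of_hasDerivAt_le_neg_mul {t : ℕ → ℝ} {K : ℕ} {g p : ℝ → ℝ}
    {b c : ℝ} (ht : Monotone t) (htop : Tendsto t atTop atTop) (hb : b < t K) (hc : 0 < c)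
    (hg : ContinuousOn g (Ici (t K))) (hp : ContinuousOn p (Ici b))
    (hP : Tendsto (fun v => ∫ s in b..v, p s) atTop atTop)
    (hd : ∀ k ≥ K, ∀ s ∈ Ioo (t k) (t (k + 1)), ∃ d ≤ -(c * p s), HasDerivAt g d s) :
    ∃ v ≥ t K, g v < 0 := by
  set P := fun v => ∫ s in b..v, p s
  have hP' : ∀ s ≥ t K, HasDerivAt P (p s) s := fun s hs =>
    hp.hasDerivAt_integral_of_Ici (hb.trans_le hs)
  have hanti : AntitoneOn (fun v => g v + c * P v) (Ici (t K)) := by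
    refine antitoneOn_Ici_of_hasDerivAt_nonpos_of_mem_Ioo ht htop
      (hg.add (continuousOn_const.mul fun s hs => (hP' s hs).continuousAt.continuousWithinAt))
      fun k hk s hs => ?_
    obtain ⟨d, hd_le, hds⟩ := hd k hk s hs
    exact ⟨d + c * p s, by linarith, hds.add ((hP' s ((ht hk).trans hs.1.le)).const_mul c)⟩
  obtain ⟨v, hPv, hv⟩ := ((hP.eventually_gt_atTop ((g (t K) + c * P (t K)) / c)).and
    (eventually_ge_atTop (t K))).exists
  refine ⟨v, hv, ?_⟩
  have hle := hanti self_mem_Ici hv hv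
  rw [div_lt_iff₀ hc] at hPv
  simp only at hle
  linarith

theorem monotoneOn_Ici_of_mul_deriv_nonneg {r x x' : ℝ → ℝ} {a : ℝ}
    (hr_pos : ∀ s ∈ Ici a, 0 < r s) (hx : ∀ s ∈ Ici a, HasDerivAt x (x' s) s)
    (hg : ∀ s ∈ Ici a, 0 ≤ r s * x' s) : MonotoneOn x (Ici a) := by
  refine monotoneOn_of_hasDerivWithinAt_nonneg (f' := x') (convex_Ici _)
    (fun s hs => (hx s hs).continuousAt.continuousWithinAt) ?_ ?_ <;>
    rw [interior_Ici] <;> intro s hs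
  · exact (hx s (mem_Ici_of_Ioi hs)).hasDerivWithinAt
  · exact nonneg_of_mul_nonneg_right (hg s (mem_Ici_of_Ioi hs))
      (hr_pos s (mem_Ici_of_Ioi hs))

namespace Depcag

/-- `x` solves `(r x')' + f(s, x(γ s)) = 0` on `[t 0, ∞)`, where `γ = ζ k` on `[t k, t (k + 1))`;
the derivative of `x` is carried as the separate function `x'`. -/
structure IsSolution (t ζ : ℕ → ℝ) (r : ℝ → ℝ) (f : ℝ → ℝ → ℝ) (x x' : ℝ → ℝ) : Prop where
  hasDerivAt : ∀ s ∈ Ici (t 0), HasDerivAt x (x' s) s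
  continuousOn_deriv : ContinuousOn x' (Ici (t 0))
  hasDerivAt_mul_deriv : ∀ k, ∀ s ∈ Ioo (t k) (t (k + 1)),
    HasDerivAt (fun u => r u * x' u) (-(f s (x (ζ k)))) s

variable {t ζ : ℕ → ℝ} {r : ℝ → ℝ} {f : ℝ → ℝ → ℝ} {x x' p φ : ℝ → ℝ}

theorem IsSolution.neg (hsol : IsSolution t ζ r f x x') :
    IsSolution t ζ r (fun s y => -f s (-y)) (-x) (-x') where
  hasDerivAt s hs := (hsol.hasDerivAt s hs).neg
  continuousOn_deriv := hsol.continuousOn_deriv.neg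
  hasDerivAt_mul_deriv k s hs := by
    simpa only [Pi.neg_def, Pi.neg_apply, mul_neg, neg_neg] using
      (hsol.hasDerivAt_mul_deriv k s hs).neg

theorem IsSolution.exists_mul_deriv_neg_of_pos (hsol : IsSolution t ζ r f x x')
    (ht : StrictMono t) (htop : Tendsto t atTop atTop) (hζ : ∀ k, t k ≤ ζ k)
    (hr : ContinuousOn r (Ici (t 0))) (hr_pos : ∀ s ∈ Ici (t 0), 0 < r s)
    (hp : ContinuousOn p (Ici (t 0))) (hp_nonneg : ∀ s ∈ Ici (t 0), 0 ≤ p s)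
    (hφ_mono : Monotone φ) (hφ_pos : ∀ y, 0 < y → 0 < φ y)
    (hfp : ∀ s ∈ Ici (t 0), ∀ y, 0 < y → p s * φ y ≤ f s y)
    (hp_int : ∫⁻ s in Ioi (t 0), ENNReal.ofReal (p s) = ⊤) {K : ℕ} (hK : 0 < K)
    (hpos : ∀ v ≥ t K, 0 < x v) : ∃ v ≥ t K, r v * x' v < 0 := by
  have hIci : Ici (t K) ⊆ Ici (t 0) := Ici_subset_Ici.2 (ht hK).le
  by_contra! hg
  have hx_mono : MonotoneOn x (Ici (t K)) := monotoneOn_Ici_of_mul_deriv_nonneg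
    (fun s hs => hr_pos s (hIci hs)) (fun s hs => hsol.hasDerivAt s (hIci hs)) hg
  have hd : ∀ k ≥ K, ∀ s ∈ Ioo (t k) (t (k + 1)),
      -(f s (x (ζ k))) ≤ -(φ (x (t K)) * p s) := by
    intro k hk s hs
    have hKζ : t K ≤ ζ k := (ht.monotone hk).trans (hζ k)
    have hs0 : s ∈ Ici (t 0) := hIci ((ht.monotone hk).trans hs.1.le)
    have := hfp s hs0 _ (hpos _ hKζ)
    have := mul_le_mul_of_nonneg_left (hφ_mono (hx_mono self_mem_Ici hKζ hKζ))
      (hp_nonneg s hs0)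
    linarith
  obtain ⟨v, hv, hgv⟩ := exists_lt_zero_of_hasDerivAt_le_neg_mul ht.monotone htop (ht hK)
    (hφ_pos _ (hpos _ le_rfl)) ((hr.mul hsol.continuousOn_deriv).mono hIci) hp
    (tendsto_integral_atTop_of_lintegral_Ioi_eq_top hp hp_nonneg hp_int le_rfl)
    fun k hk s hs => ⟨_, hd k hk s hs, hsol.hasDerivAt_mul_deriv k s hs⟩
  exact (hg v hv).not_gt hgv

theorem IsSolution.frequently_atTop_nonpos (hsol : IsSolution t ζ r f x x')
    (ht : StrictMono t) (htop : Tendsto t atTop atTop) (hζ : ∀ k, t k ≤ ζ k)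
    (hr : ContinuousOn r (Ici (t 0))) (hr_pos : ∀ s ∈ Ici (t 0), 0 < r s)
    (hp : ContinuousOn p (Ici (t 0))) (hp_nonneg : ∀ s ∈ Ici (t 0), 0 ≤ p s)
    (hφ_mono : Monotone φ) (hφ_pos : ∀ y, 0 < y → 0 < φ y)
    (hfp : ∀ s ∈ Ici (t 0), ∀ y, 0 < y → p s * φ y ≤ f s y)
    (hr_int : ∫⁻ s in Ioi (t 0), ENNReal.ofReal (1 / r s) = ⊤)
    (hp_int : ∫⁻ s in Ioi (t 0), ENNReal.ofReal (p s) = ⊤) :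
    ∃ᶠ v in atTop, x v ≤ 0 := by
  by_contra hfreq
  obtain ⟨T, hpos⟩ := eventually_atTop.1 (not_frequently.1 hfreq)
  simp only [not_le] at hpos
  obtain ⟨K, hK, hTK⟩ := ((eventually_gt_atTop 0).and (htop.eventually_ge_atTop T)).exists
  have hIci : Ici (t K) ⊆ Ici (t 0) := Ici_subset_Ici.2 (ht hK).le
  have hg_anti : AntitoneOn (fun s => r s * x' s) (Ici (t K)) := by
    refine antitoneOn_Ici_of_hasDerivAt_nonpos_of_mem_Ioo ht.monotone htop
      ((hr.mul hsol.continuousOn_deriv).mono hIci)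
      fun k hk s hs => ⟨_, ?_, hsol.hasDerivAt_mul_deriv k s hs⟩
    have hs0 : s ∈ Ici (t 0) := hIci ((ht.monotone hk).trans hs.1.le)
    have hxζ : 0 < x (ζ k) := hpos _ (hTK.trans ((ht.monotone hk).trans (hζ k)))
    have := hfp s hs0 _ hxζ
    have := mul_nonneg (hp_nonneg s hs0) (hφ_pos _ hxζ).le
    linarith
  obtain ⟨v₀, hv₀, hgv₀⟩ := hsol.exists_mul_deriv_neg_of_pos ht htop hζ hr hr_pos hp hp_nonneg
    hφ_mono hφ_pos hfp hp_int hK fun v hv => hpos v (hTK.trans hv)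
  have hv₀0 : Ici v₀ ⊆ Ici (t 0) := hIci.trans' (Ici_subset_Ici.2 hv₀)
  have hx_bot : Tendsto x atTop atBot :=
    tendsto_atBot_of_mul_deriv_le_neg hgv₀ (hr.mono hv₀0) (fun s hs => hr_pos s (hv₀0 hs))
      (tendsto_integral_atTop_of_lintegral_Ioi_eq_top
        (continuousOn_const.div hr fun s hs => (hr_pos s hs).ne')
        (fun s hs => one_div_nonneg.2 (hr_pos s hs).le) hr_int (hv₀0 self_mem_Ici))
      (fun s hs => hsol.hasDerivAt s (hv₀0 hs)) (hsol.continuousOn_deriv.mono hv₀0)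
      fun s hs => hg_anti hv₀ (hv₀.trans hs) hs
  obtain ⟨v, hxv, hv⟩ := ((hx_bot.eventually_le_atBot 0).and (eventually_ge_atTop T)).exists
  exact (hpos v hv).not_ge hxv

theorem IsSolution.frequently_atTop_nonneg (hsol : IsSolution t ζ r f x x')
    (ht : StrictMono t) (htop : Tendsto t atTop atTop) (hζ : ∀ k, t k ≤ ζ k)
    (hr : ContinuousOn r (Ici (t 0))) (hr_pos : ∀ s ∈ Ici (t 0), 0 < r s)
    (hp : ContinuousOn p (Ici (t 0))) (hp_nonneg : ∀ s ∈ Ici (t 0), 0 ≤ p s)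
    (hφ_mono : Monotone φ) (hφ_neg : ∀ y, y < 0 → φ y < 0)
    (hfp : ∀ s ∈ Ici (t 0), ∀ y, y < 0 → f s y ≤ p s * φ y)
    (hr_int : ∫⁻ s in Ioi (t 0), ENNReal.ofReal (1 / r s) = ⊤)
    (hp_int : ∫⁻ s in Ioi (t 0), ENNReal.ofReal (p s) = ⊤) :
    ∃ᶠ v in atTop, 0 ≤ x v := by
  have hneg := hsol.neg.frequently_atTop_nonpos (φ := fun y => -φ (-y)) ht htop hζ hr hr_pos
    hp hp_nonneg (fun _ _ hab => neg_le_neg (hφ_mono (neg_le_neg hab)))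
    (fun y hy => neg_pos.2 (hφ_neg _ (neg_neg_of_pos hy)))
    (fun s hs y hy => by linarith [mul_neg (p s) (φ (-y)), hfp s hs _ (neg_neg_of_pos hy)])
    hr_int hp_int
  simpa only [Pi.neg_apply, neg_nonpos] using hneg

end Depcag

theorem stmt1_general
    (t ζ : ℕ → ℝ) (ht_mono : StrictMono t)
    (ht_top : Tendsto t atTop atTop)
    (hζ : ∀ k : ℕ, ζ k ∈ Icc (t k) (t (k+1)))
    (r : ℝ → ℝ) (hr_cont : ContinuousOn r (Ici (t 0)))
    (hr_pos : ∀ s ∈ Ici (t 0), 0 < r s)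
    (f : ℝ → ℝ → ℝ)
    (x x' : ℝ → ℝ)
    (hx_deriv : ∀ s ∈ Ici (t 0), HasDerivAt x (x' s) s)
    (hx'_cont : ContinuousOn x' (Ici (t 0)))
    (hE : ∀ k : ℕ, ∀ s ∈ Ioo (t k) (t (k+1)),
      HasDerivAt (fun u => r u * x' u) (-(f s (x (ζ k)))) s)
    (p : ℝ → ℝ) (hp_cont : ContinuousOn p (Ici (t 0)))
    (hp_nonneg : ∀ s ∈ Ici (t 0), 0 ≤ p s)
    (φ : ℝ → ℝ) (hφ_mono : Monotone φ)
    (hφ_sign : ∀ y : ℝ, y ≠ 0 → 0 < y * φ y)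
    (hfp_pos : ∀ s ∈ Ici (t 0), ∀ y : ℝ, 0 < y → p s * φ y ≤ f s y)
    (hfp_neg : ∀ s ∈ Ici (t 0), ∀ y : ℝ, y < 0 → f s y ≤ p s * φ y)
    (hr_int : ∫⁻ s in Ioi (t 0), ENNReal.ofReal (1 / r s) = ⊤)
    (hp_int : ∫⁻ s in Ioi (t 0), ENNReal.ofReal (p s) = ⊤) :
    ∃ a b : ℕ → ℝ, Tendsto a atTop atTop ∧ Tendsto b atTop atTop ∧
      ∀ n : ℕ, x (a n) ≤ 0 ∧ 0 ≤ x (b n) := by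
  have hsol : Depcag.IsSolution t ζ r f x x' := ⟨hx_deriv, hx'_cont, hE⟩
  have hζ' : ∀ k, t k ≤ ζ k := fun k => (hζ k).1
  obtain ⟨a, ha, hxa⟩ := exists_seq_forall_of_frequently <|
    hsol.frequently_atTop_nonpos ht_mono ht_top hζ' hr_cont hr_pos hp_cont hp_nonneg hφ_mono
      (fun y hy => pos_of_mul_pos_right (hφ_sign y hy.ne') hy.le) hfp_pos hr_int hp_int
  obtain ⟨b, hb, hxb⟩ := exists_seq_forall_of_frequently <|
    hsol.frequently_atTop_nonneg ht_mono ht_top hζ' hr_cont hr_pos hp_cont hp_nonneg hφ_mono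
      (fun y hy => neg_of_mul_pos_right (hφ_sign y hy.ne) hy.le) hfp_neg hr_int hp_int
  exact ⟨a, b, ha, hb, fun n => ⟨hxa n, hxb n⟩⟩

theorem stmt1
    (t ζ : ℕ → ℝ) (ht_mono : StrictMono t)
    (ht_top : Tendsto t atTop atTop)
    (hζ : ∀ k : ℕ, ζ k ∈ Icc (t k) (t (k+1)))
    (r : ℝ → ℝ) (hr_cont : ContinuousOn r (Ici (t 0)))
    (hr_pos : ∀ s ∈ Ici (t 0), 0 < r s)
    (f : ℝ → ℝ → ℝ)
    (hf_cont : ContinuousOn (fun q : ℝ × ℝ => f q.1 q.2) ((Ici (t 0)) ×ˢ (univ : Set ℝ)))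
    (hf_sign : ∀ s ∈ Ici (t 0), ∀ y : ℝ, y ≠ 0 → 0 < y * f s y)
    (x x' : ℝ → ℝ)
    (hx_deriv : ∀ s ∈ Ici (t 0), HasDerivAt x (x' s) s)
    (hx'_cont : ContinuousOn x' (Ici (t 0)))
    (hE : ∀ k : ℕ, ∀ s ∈ Ioo (t k) (t (k+1)),
      HasDerivAt (fun u => r u * x' u) (-(f s (x (ζ k)))) s)
    (p : ℝ → ℝ) (hp_cont : ContinuousOn p (Ici (t 0)))
    (hp_nonneg : ∀ s ∈ Ici (t 0), 0 ≤ p s)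
    (φ : ℝ → ℝ) (hφ_smooth : ContDiff ℝ 1 φ) (hφ_mono : Monotone φ)
    (hφ_sign : ∀ y : ℝ, y ≠ 0 → 0 < y * φ y)
    (hfp_pos : ∀ s ∈ Ici (t 0), ∀ y : ℝ, 0 < y → p s * φ y ≤ f s y)
    (hfp_neg : ∀ s ∈ Ici (t 0), ∀ y : ℝ, y < 0 → f s y ≤ p s * φ y)
    (hr_int : ∫⁻ s in Ioi (t 0), ENNReal.ofReal (1 / r s) = ⊤)
    (hp_int : ∫⁻ s in Ioi (t 0), ENNReal.ofReal (p s) = ⊤) :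
    ∃ a b : ℕ → ℝ, Tendsto a atTop atTop ∧ Tendsto b atTop atTop ∧
      ∀ n : ℕ, x (a n) ≤ 0 ∧ 0 ≤ x (b n) :=
  stmt1_general t ζ ht_mono ht_top hζ r hr_cont hr_pos f x x' hx_deriv hx'_cont hE p hp_cont
    hp_nonneg φ hφ_mono hφ_sign hfp_pos hfp_neg hr_int hp_int
end

section
/- Let x be a solution of (E) with x(t) > 0 and x′(t) ≥ 0 for all t ≥ τ. Then for every k, r(t_{k+1})·x′(t_{k+1})/φ(x(ζ_k)) ≤ r(t_k)·x′(t_k)/φ(x(ζ_k)) − ∫_{t_k}^{t_{k+1}} p(s) ds. -/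
open MeasureTheory Set Filter

theorem stmt8
    (t ζ : ℕ → ℝ) (ht_mono : StrictMono t)
    (ht_top : Tendsto t atTop atTop)
    (hζ : ∀ k : ℕ, ζ k ∈ Icc (t k) (t (k+1)))
    (r : ℝ → ℝ) (hr_cont : ContinuousOn r (Ici (t 0)))
    (hr_pos : ∀ s ∈ Ici (t 0), 0 < r s)
    (f : ℝ → ℝ → ℝ)
    (hf_cont : ContinuousOn (fun q : ℝ × ℝ => f q.1 q.2) ((Ici (t 0)) ×ˢ (univ : Set ℝ)))
    (hf_sign : ∀ s ∈ Ici (t 0), ∀ y : ℝ, y ≠ 0 → 0 < y * f s y)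
    (x x' : ℝ → ℝ)
    (hx_deriv : ∀ s ∈ Ici (t 0), HasDerivAt x (x' s) s)
    (hx'_cont : ContinuousOn x' (Ici (t 0)))
    (hE : ∀ k : ℕ, ∀ s ∈ Ioo (t k) (t (k+1)),
      HasDerivAt (fun u => r u * x' u) (-(f s (x (ζ k)))) s)
    (p : ℝ → ℝ) (hp_cont : ContinuousOn p (Ici (t 0)))
    (hp_nonneg : ∀ s ∈ Ici (t 0), 0 ≤ p s)
    (φ : ℝ → ℝ) (hφ_smooth : ContDiff ℝ 1 φ) (hφ_mono : Monotone φ)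
    (hφ_sign : ∀ y : ℝ, y ≠ 0 → 0 < y * φ y)
    (hfp_pos : ∀ s ∈ Ici (t 0), ∀ y : ℝ, 0 < y → p s * φ y ≤ f s y)
    (hfp_neg : ∀ s ∈ Ici (t 0), ∀ y : ℝ, y < 0 → f s y ≤ p s * φ y)
    (hx_pos : ∀ s ∈ Ici (t 0), 0 < x s)
    (hx'_nonneg : ∀ s ∈ Ici (t 0), 0 ≤ x' s) :
    ∀ k : ℕ,
      r (t (k+1)) * x' (t (k+1)) / φ (x (ζ k)) ≤
        r (t k) * x' (t k) / φ (x (ζ k)) - ∫ s in t k..t (k+1), p s := by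
  intro k
  have htk : t 0 ≤ t k := ht_mono.monotone (Nat.zero_le k)
  have hab : t k ≤ t (k+1) := (ht_mono (Nat.lt_succ_self k)).le
  have hIcc : Icc (t k) (t (k+1)) ⊆ Ici (t 0) := fun s hs => le_trans htk hs.1
  have hζk : ζ k ∈ Ici (t 0) := hIcc (hζ k)
  set c := x (ζ k) with hc
  have hcpos : 0 < c := hx_pos _ hζk
  have hφc : 0 < φ c := by
    have := hφ_sign c hcpos.ne'
    nlinarith
  -- continuity of s ↦ f s c on Icc
  have hfc_cont : ContinuousOn (fun s => f s c) (Icc (t k) (t (k+1))) := by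
    have : ContinuousOn (fun s => f s c) (Ici (t 0)) := by
      have h1 : ContinuousOn (fun s : ℝ => ((s, c) : ℝ × ℝ)) (Ici (t 0)) :=
        (continuous_id.prodMk continuous_const).continuousOn
      exact hf_cont.comp h1 (fun s hs => ⟨hs, mem_univ _⟩)
    exact this.mono hIcc
  have hfc_int : IntervalIntegrable (fun s => -(f s c)) volume (t k) (t (k+1)) :=
    hfc_cont.neg.intervalIntegrable_of_Icc hab
  have hp_int : IntervalIntegrable p volume (t k) (t (k+1)) :=
    ((hp_cont.mono hIcc).intervalIntegrable_of_Icc hab)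
  -- FTC
  have hftc : (∫ s in t k..t (k+1), -(f s c)) =
      r (t (k+1)) * x' (t (k+1)) - r (t k) * x' (t k) :=
    intervalIntegral.integral_eq_sub_of_hasDeriv_right_of_le hab
      ((hr_cont.mono hIcc).mul (hx'_cont.mono hIcc))
      (fun s hs => (hE k s hs).hasDerivWithinAt) hfc_int
  -- pointwise bound
  have hmono : (∫ s in t k..t (k+1), -(f s c)) ≤
      ∫ s in t k..t (k+1), -(p s * φ c) := by
    apply intervalIntegral.integral_mono_on hab hfc_int
    · exact ((hp_cont.mono hIcc).mul continuousOn_const).neg.intervalIntegrable_of_Icc hab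
    · intro s hs
      have := hfp_pos s (hIcc hs) c hcpos
      linarith
  have hneg : (∫ s in t k..t (k+1), -(p s * φ c)) =
      -(φ c * ∫ s in t k..t (k+1), p s) := by
    rw [← intervalIntegral.integral_const_mul]
    rw [← intervalIntegral.integral_neg]
    congr 1; ext s; ring
  have key : r (t (k+1)) * x' (t (k+1)) ≤
      r (t k) * x' (t k) - φ c * ∫ s in t k..t (k+1), p s := by
    rw [hneg] at hmono
    linarith [hftc ▸ hmono]
  have h2 : (r (t k) * x' (t k) - φ c * ∫ s in t k..t (k+1), p s) / φ c
      = r (t k) * x' (t k) / φ c - ∫ s in t k..t (k+1), p s := by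
    field_simp
  rw [← h2]
  exact (div_le_div_iff_of_pos_right hφc).mpr key
end

section
/- Let x be a solution of (E) with x(t) > 0 and x′(t) ≥ 0 for all t ≥ τ. Then for every k and every n ≥ 1, r(t_{k+n})·x′(t_{k+n})/φ(x(ζ_{k+n−1})) ≤ r(t_k)·x′(t_k)/φ(x(ζ_k)) − ∫_{t_k}^{t_{k+n}} p(s) ds. -/
open MeasureTheory Set Filter

/-
Write `R = r x'`. On `[t_j, t_{j+1}]` the argument `x(γ(s)) = x(ζ_j)` is frozen, so
`R' = -f(s, x(ζ_j)) ≤ -φ(x(ζ_j)) p(s)`, and integrating gives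
`R(t_{j+1}) ≤ R(t_j) - φ(x(ζ_j)) ∫_{t_j}^{t_{j+1}} p`. Dividing by `φ(x(ζ_j)) > 0` yields a one-step
inequality; the steps chain together because `R ≥ 0` and `j ↦ φ(x(ζ_j))` is nondecreasing
(`x` increases and `ζ_j ≤ ζ_{j+1}`), so that `R(t_{j+1}) / φ(x(ζ_{j+1})) ≤ R(t_{j+1}) / φ(x(ζ_j))`.
-/

lemma div_le_div_sub_integral_of_hasDerivAt {R F p : ℝ → ℝ} {a b c : ℝ} (hab : a ≤ b)
    (hc : 0 < c) (hR : ContinuousOn R (Icc a b)) (hR' : ∀ s ∈ Ioo a b, HasDerivAt R (-F s) s)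
    (hp : ContinuousOn p (Icc a b)) (hF : ∀ s ∈ Ioo a b, c * p s ≤ F s) :
    R b / c ≤ R a / c - ∫ s in a..b, p s := by
  have h := intervalIntegral.sub_le_integral_of_hasDeriv_right_of_le hab hR
    (fun s hs => (hR' s hs).hasDerivWithinAt) (hp.const_smul c).neg.integrableOn_Icc
    (fun s hs => neg_le_neg (hF s hs))
  simp only [Pi.neg_apply, Pi.smul_apply, smul_eq_mul, intervalIntegral.integral_neg,
    intervalIntegral.integral_const_mul] at h
  calc R b / c ≤ (R a - c * ∫ s in a..b, p s) / c := by gcongr; linarith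
    _ = R a / c - ∫ s in a..b, p s := by rw [sub_div, mul_div_cancel_left₀ _ hc.ne']

lemma div_le_div_sub_sum_of_succ_div_le {u w I : ℕ → ℝ} (hu : ∀ j, 0 ≤ u j)
    (hw : ∀ j, 0 < w j) (hw_mono : Monotone w)
    (hstep : ∀ j, u (j + 1) / w j ≤ u j / w j - I j) (n : ℕ) :
    u (n + 1) / w n ≤ u 0 / w 0 - ∑ i ∈ Finset.range (n + 1), I i := by
  induction n with
  | zero => simpa using hstep 0
  | succ n ih =>
    have hw_step : u (n + 1) / w (n + 1) ≤ u (n + 1) / w n :=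
      div_le_div_of_nonneg_left (hu _) (hw n) (hw_mono n.le_succ)
    rw [Finset.sum_range_succ]
    linarith [hstep (n + 1)]

lemma monotoneOn_Ici_of_hasDerivAt_nonneg {g g' : ℝ → ℝ} {a : ℝ}
    (hg : ∀ s ∈ Ici a, HasDerivAt g (g' s) s) (hg' : ∀ s ∈ Ici a, 0 ≤ g' s) :
    MonotoneOn g (Ici a) :=
  monotoneOn_of_hasDerivWithinAt_nonneg (convex_Ici a)
    (fun s hs => (hg s hs).continuousAt.continuousWithinAt)
    (fun s hs => (hg s (interior_subset hs)).hasDerivWithinAt)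
    (fun s hs => hg' s (interior_subset hs))

theorem stmt9_general
    (t ζ : ℕ → ℝ) (ht_mono : StrictMono t)
    (hζ : ∀ k : ℕ, ζ k ∈ Icc (t k) (t (k+1)))
    (r : ℝ → ℝ) (hr_cont : ContinuousOn r (Ici (t 0)))
    (hr_pos : ∀ s ∈ Ici (t 0), 0 < r s)
    (f : ℝ → ℝ → ℝ)
    (x x' : ℝ → ℝ)
    (hx_deriv : ∀ s ∈ Ici (t 0), HasDerivAt x (x' s) s)
    (hx'_cont : ContinuousOn x' (Ici (t 0)))
    (hE : ∀ k : ℕ, ∀ s ∈ Ioo (t k) (t (k+1)),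
      HasDerivAt (fun u => r u * x' u) (-(f s (x (ζ k)))) s)
    (p : ℝ → ℝ) (hp_cont : ContinuousOn p (Ici (t 0)))
    (φ : ℝ → ℝ) (hφ_mono : Monotone φ)
    (hφ_sign : ∀ y : ℝ, y ≠ 0 → 0 < y * φ y)
    (hfp_pos : ∀ s ∈ Ici (t 0), ∀ y : ℝ, 0 < y → p s * φ y ≤ f s y)
    (hx_pos : ∀ s ∈ Ici (t 0), 0 < x s)
    (hx'_nonneg : ∀ s ∈ Ici (t 0), 0 ≤ x' s) :
    ∀ k n : ℕ, 1 ≤ n →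
      r (t (k+n)) * x' (t (k+n)) / φ (x (ζ (k+n-1))) ≤
        r (t k) * x' (t k) / φ (x (ζ k)) - ∫ s in t k..t (k+n), p s := by
  have ht0 (j : ℕ) : t 0 ≤ t j := ht_mono.monotone j.zero_le
  have hIcc (j : ℕ) : Icc (t j) (t (j + 1)) ⊆ Ici (t 0) := fun s hs => (ht0 j).trans hs.1
  have hζ0 (j : ℕ) : ζ j ∈ Ici (t 0) := (ht0 j).trans (hζ j).1
  have hx_mono := monotoneOn_Ici_of_hasDerivAt_nonneg hx_deriv hx'_nonneg
  have hφ_pos (j : ℕ) : 0 < φ (x (ζ j)) :=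
    pos_of_mul_pos_right (hφ_sign _ (hx_pos _ (hζ0 j)).ne') (hx_pos _ (hζ0 j)).le
  have hφx_mono : Monotone fun j => φ (x (ζ j)) := monotone_nat_of_le_succ fun j =>
    hφ_mono (hx_mono (hζ0 j) (hζ0 (j + 1)) ((hζ j).2.trans (hζ (j + 1)).1))
  have hstep (j : ℕ) : r (t (j + 1)) * x' (t (j + 1)) / φ (x (ζ j)) ≤
      r (t j) * x' (t j) / φ (x (ζ j)) - ∫ s in t j..t (j + 1), p s :=
    div_le_div_sub_integral_of_hasDerivAt (ht_mono j.lt_succ_self).le (hφ_pos j)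
      ((hr_cont.mul hx'_cont).mono (hIcc j)) (hE j) (hp_cont.mono (hIcc j))
      fun s hs => (mul_comm _ _).trans_le
        (hfp_pos s (hIcc j (Ioo_subset_Icc_self hs)) _ (hx_pos _ (hζ0 j)))
  intro k n hn
  obtain ⟨m, rfl⟩ := Nat.exists_eq_add_of_le' hn
  have hsum := intervalIntegral.sum_integral_adjacent_intervals (a := fun i => t (k + i))
    (n := m + 1) (f := p) (μ := volume) fun i _ =>
      (hp_cont.mono (hIcc (k + i))).intervalIntegrable_of_Icc (ht_mono (k + i).lt_succ_self).le
  have h := div_le_div_sub_sum_of_succ_div_le (u := fun i => r (t (k + i)) * x' (t (k + i)))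
    (fun i => mul_nonneg (hr_pos _ (ht0 _)).le (hx'_nonneg _ (ht0 _)))
    (fun i => hφ_pos (k + i)) (hφx_mono.comp fun _ _ h => Nat.add_le_add_left h k)
    (fun i => hstep (k + i)) m
  simp only [add_zero, ← add_assoc] at hsum h ⊢
  rw [hsum] at h
  rwa [Nat.add_sub_cancel]

theorem stmt9
    (t ζ : ℕ → ℝ) (ht_mono : StrictMono t)
    (ht_top : Tendsto t atTop atTop)
    (hζ : ∀ k : ℕ, ζ k ∈ Icc (t k) (t (k+1)))
    (r : ℝ → ℝ) (hr_cont : ContinuousOn r (Ici (t 0)))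
    (hr_pos : ∀ s ∈ Ici (t 0), 0 < r s)
    (f : ℝ → ℝ → ℝ)
    (hf_cont : ContinuousOn (fun q : ℝ × ℝ => f q.1 q.2) ((Ici (t 0)) ×ˢ (univ : Set ℝ)))
    (hf_sign : ∀ s ∈ Ici (t 0), ∀ y : ℝ, y ≠ 0 → 0 < y * f s y)
    (x x' : ℝ → ℝ)
    (hx_deriv : ∀ s ∈ Ici (t 0), HasDerivAt x (x' s) s)
    (hx'_cont : ContinuousOn x' (Ici (t 0)))
    (hE : ∀ k : ℕ, ∀ s ∈ Ioo (t k) (t (k+1)),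
      HasDerivAt (fun u => r u * x' u) (-(f s (x (ζ k)))) s)
    (p : ℝ → ℝ) (hp_cont : ContinuousOn p (Ici (t 0)))
    (hp_nonneg : ∀ s ∈ Ici (t 0), 0 ≤ p s)
    (φ : ℝ → ℝ) (hφ_smooth : ContDiff ℝ 1 φ) (hφ_mono : Monotone φ)
    (hφ_sign : ∀ y : ℝ, y ≠ 0 → 0 < y * φ y)
    (hfp_pos : ∀ s ∈ Ici (t 0), ∀ y : ℝ, 0 < y → p s * φ y ≤ f s y)
    (hfp_neg : ∀ s ∈ Ici (t 0), ∀ y : ℝ, y < 0 → f s y ≤ p s * φ y)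
    (hx_pos : ∀ s ∈ Ici (t 0), 0 < x s)
    (hx'_nonneg : ∀ s ∈ Ici (t 0), 0 ≤ x' s) :
    ∀ k n : ℕ, 1 ≤ n →
      r (t (k+n)) * x' (t (k+n)) / φ (x (ζ (k+n-1))) ≤
        r (t k) * x' (t k) / φ (x (ζ k)) - ∫ s in t k..t (k+n), p s :=
  stmt9_general t ζ ht_mono hζ r hr_cont hr_pos f x x' hx_deriv hx'_cont hE p hp_cont φ hφ_mono
    hφ_sign hfp_pos hx_pos hx'_nonneg
end

section
/- Let x be a solution of (E) with x(t) ≥ 0 and x′(t) ≥ 0 for all t ≥ τ. Then for every k, x′(ζ_k) ≥ (r(t_{k+1})/r(ζ_k))·x′(t_{k+1}) + (φ(x(ζ_k))/r(ζ_k))·∫_{ζ_k}^{t_{k+1}} p(u) du. -/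
open MeasureTheory Set Filter

/-! On `[ζ_k, t_{k+1}]` the argument `γ` is frozen at `ζ_k`, so `(r x')' = -f(s, x(ζ_k))` there and
integrating gives `r(ζ_k) x'(ζ_k) - r(t_{k+1}) x'(t_{k+1}) = ∫ f(u, x(ζ_k)) du`. Since `x(ζ_k) ≥ 0`,
the bound `f ≥ p φ`, assumed for positive arguments, extends by continuity to `x(ζ_k)`, and
dividing by `r(ζ_k) > 0` gives the claim. -/

theorem le_of_forall_pos_le_of_continuousOn {g h : ℝ → ℝ} (hg : ContinuousOn g (Ici 0))
    (hh : ContinuousOn h (Ici 0)) (hle : ∀ z, 0 < z → g z ≤ h z) {y : ℝ} (hy : 0 ≤ y) :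
    g y ≤ h y := by
  have hy' : y ∈ closure (Ioi 0) := by rwa [closure_Ioi]
  exact ContinuousWithinAt.closure_le hy' ((hg y hy).mono Ioi_subset_Ici_self)
    ((hh y hy).mono Ioi_subset_Ici_self) hle

theorem integral_le_sub_of_hasDerivAt_neg {g F G : ℝ → ℝ} {a b : ℝ} (hab : a ≤ b)
    (hg : ContinuousOn g (Icc a b)) (hderiv : ∀ s ∈ Ioo a b, HasDerivAt g (-F s) s)
    (hG : IntegrableOn G (Icc a b)) (hGF : ∀ s ∈ Ioo a b, G s ≤ F s) :
    ∫ s in a..b, G s ≤ g a - g b := by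
  have h := intervalIntegral.integral_le_sub_of_hasDeriv_right_of_le hab hg.neg
    (fun s hs => (hderiv s hs).neg.hasDerivWithinAt) hG (fun s hs => by simpa using hGF s hs)
  simpa [sub_eq_neg_add, add_comm] using h

theorem stmt10_general
    (t ζ : ℕ → ℝ) (ht_mono : StrictMono t)
    (hζ : ∀ k : ℕ, ζ k ∈ Icc (t k) (t (k+1)))
    (r : ℝ → ℝ) (hr_cont : ContinuousOn r (Ici (t 0)))
    (hr_pos : ∀ s ∈ Ici (t 0), 0 < r s)
    (f : ℝ → ℝ → ℝ)
    (hf_cont : ContinuousOn (fun q : ℝ × ℝ => f q.1 q.2) ((Ici (t 0)) ×ˢ (univ : Set ℝ)))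
    (x x' : ℝ → ℝ)
    (hx'_cont : ContinuousOn x' (Ici (t 0)))
    (hE : ∀ k : ℕ, ∀ s ∈ Ioo (t k) (t (k+1)),
      HasDerivAt (fun u => r u * x' u) (-(f s (x (ζ k)))) s)
    (p : ℝ → ℝ) (hp_cont : ContinuousOn p (Ici (t 0)))
    (φ : ℝ → ℝ) (hφ_smooth : ContDiff ℝ 1 φ)
    (hfp_pos : ∀ s ∈ Ici (t 0), ∀ y : ℝ, 0 < y → p s * φ y ≤ f s y)
    (hx_nonneg : ∀ s ∈ Ici (t 0), 0 ≤ x s) :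
    ∀ k : ℕ,
      (r (t (k+1)) / r (ζ k)) * x' (t (k+1)) +
        (φ (x (ζ k)) / r (ζ k)) * ∫ u in ζ k..t (k+1), p u ≤ x' (ζ k) := by
  intro k
  obtain ⟨htζ, hζt⟩ := hζ k
  have hζ0 : t 0 ≤ ζ k := (ht_mono.monotone k.zero_le).trans htζ
  have hsub : Icc (ζ k) (t (k+1)) ⊆ Ici (t 0) := fun u hu => hζ0.trans hu.1
  have hpf : ∀ u ∈ Icc (ζ k) (t (k+1)), φ (x (ζ k)) * p u ≤ f u (x (ζ k)) := fun u hu => by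
    have hfu : ContinuousOn (f u) (Ici 0) := hf_cont.comp_continuous
      (continuous_const.prodMk continuous_id) (fun _ => ⟨hsub hu, mem_univ _⟩) |>.continuousOn
    rw [mul_comm]
    exact le_of_forall_pos_le_of_continuousOn
      (continuous_const.mul hφ_smooth.continuous).continuousOn hfu (hfp_pos u (hsub hu))
      (hx_nonneg _ hζ0)
  have key := integral_le_sub_of_hasDerivAt_neg (g := fun u => r u * x' u)
    (G := fun u => φ (x (ζ k)) * p u) hζt ((hr_cont.mono hsub).mul (hx'_cont.mono hsub))
    (fun s hs => hE k s ⟨htζ.trans_lt hs.1, hs.2⟩)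
    (continuousOn_const.mul (hp_cont.mono hsub)).integrableOn_Icc
    (fun s hs => hpf s (Ioo_subset_Icc_self hs))
  rw [intervalIntegral.integral_const_mul] at key
  rw [div_mul_eq_mul_div, div_mul_eq_mul_div, ← add_div, div_le_iff₀ (hr_pos _ hζ0)]
  linarith

theorem stmt10
    (t ζ : ℕ → ℝ) (ht_mono : StrictMono t)
    (ht_top : Tendsto t atTop atTop)
    (hζ : ∀ k : ℕ, ζ k ∈ Icc (t k) (t (k+1)))
    (r : ℝ → ℝ) (hr_cont : ContinuousOn r (Ici (t 0)))
    (hr_pos : ∀ s ∈ Ici (t 0), 0 < r s)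
    (f : ℝ → ℝ → ℝ)
    (hf_cont : ContinuousOn (fun q : ℝ × ℝ => f q.1 q.2) ((Ici (t 0)) ×ˢ (univ : Set ℝ)))
    (hf_sign : ∀ s ∈ Ici (t 0), ∀ y : ℝ, y ≠ 0 → 0 < y * f s y)
    (x x' : ℝ → ℝ)
    (hx_deriv : ∀ s ∈ Ici (t 0), HasDerivAt x (x' s) s)
    (hx'_cont : ContinuousOn x' (Ici (t 0)))
    (hE : ∀ k : ℕ, ∀ s ∈ Ioo (t k) (t (k+1)),
      HasDerivAt (fun u => r u * x' u) (-(f s (x (ζ k)))) s)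
    (p : ℝ → ℝ) (hp_cont : ContinuousOn p (Ici (t 0)))
    (hp_nonneg : ∀ s ∈ Ici (t 0), 0 ≤ p s)
    (φ : ℝ → ℝ) (hφ_smooth : ContDiff ℝ 1 φ) (hφ_mono : Monotone φ)
    (hφ_sign : ∀ y : ℝ, y ≠ 0 → 0 < y * φ y)
    (hfp_pos : ∀ s ∈ Ici (t 0), ∀ y : ℝ, 0 < y → p s * φ y ≤ f s y)
    (hfp_neg : ∀ s ∈ Ici (t 0), ∀ y : ℝ, y < 0 → f s y ≤ p s * φ y)
    (hx_nonneg : ∀ s ∈ Ici (t 0), 0 ≤ x s)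
    (hx'_nonneg : ∀ s ∈ Ici (t 0), 0 ≤ x' s) :
    ∀ k : ℕ,
      (r (t (k+1)) / r (ζ k)) * x' (t (k+1)) +
        (φ (x (ζ k)) / r (ζ k)) * ∫ u in ζ k..t (k+1), p u ≤ x' (ζ k) :=
  stmt10_general t ζ ht_mono hζ r hr_cont hr_pos f hf_cont x x' hx'_cont hE p hp_cont φ hφ_smooth
    hfp_pos hx_nonneg
end

section
/- Let x be a solution of (E) with x(t) ≥ 0 and x′(t) ≥ 0 for all t ≥ τ. Then for every k, x′(t_k) ≥ (r(t_{k+1})/r(t_k))·x′(t_{k+1}) + (φ(x(ζ_k))/r(t_k))·∫_{t_k}^{t_{k+1}} p(u) du. -/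
/-! Integrating the equation over `[t k, t (k+1)]`, where the delayed argument is frozen at
`c = x (ζ k) ≥ 0`, gives `r(t_{k+1}) x'(t_{k+1}) - r(t_k) x'(t_k) = -∫ f(u, c) du`, and
`f(u, c) ≥ p(u) φ(c)`. For `c > 0` this is an assumption; for `c = 0` it follows by letting
`y ↓ 0` in `p(u) φ(y) ≤ f(u, y)`. -/

open MeasureTheory Set Filter

theorem mul_le_of_nonneg_of_forall_pos {S : Set ℝ} {f : ℝ → ℝ → ℝ} {p φ : ℝ → ℝ}
    (hf : ContinuousOn (fun q : ℝ × ℝ => f q.1 q.2) (S ×ˢ univ)) (hφ : Continuous φ)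
    (hfp : ∀ s ∈ S, ∀ y : ℝ, 0 < y → p s * φ y ≤ f s y)
    {s y : ℝ} (hs : s ∈ S) (hy : 0 ≤ y) : p s * φ y ≤ f s y := by
  have hfs : Continuous (fun y => f s y) :=
    continuousOn_univ.1 <| hf.comp (continuous_const.prodMk continuous_id).continuousOn
      fun _ _ => ⟨hs, trivial⟩
  exact ContinuousWithinAt.closure_le (s := Ioi 0) (by rwa [closure_Ioi])
    (continuous_const.mul hφ).continuousWithinAt hfs.continuousWithinAt (hfp s hs)

theorem stmt11_general
    (t ζ : ℕ → ℝ) (ht_mono : StrictMono t)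
    (hζ : ∀ k : ℕ, ζ k ∈ Icc (t k) (t (k+1)))
    (r : ℝ → ℝ) (hr_cont : ContinuousOn r (Ici (t 0)))
    (hr_pos : ∀ s ∈ Ici (t 0), 0 < r s)
    (f : ℝ → ℝ → ℝ)
    (hf_cont : ContinuousOn (fun q : ℝ × ℝ => f q.1 q.2) ((Ici (t 0)) ×ˢ (univ : Set ℝ)))
    (x x' : ℝ → ℝ)
    (hx'_cont : ContinuousOn x' (Ici (t 0)))
    (hE : ∀ k : ℕ, ∀ s ∈ Ioo (t k) (t (k+1)),
      HasDerivAt (fun u => r u * x' u) (-(f s (x (ζ k)))) s)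
    (p : ℝ → ℝ) (hp_cont : ContinuousOn p (Ici (t 0)))
    (φ : ℝ → ℝ) (hφ_smooth : ContDiff ℝ 1 φ)
    (hfp_pos : ∀ s ∈ Ici (t 0), ∀ y : ℝ, 0 < y → p s * φ y ≤ f s y)
    (hx_nonneg : ∀ s ∈ Ici (t 0), 0 ≤ x s) :
    ∀ k : ℕ,
      (r (t (k+1)) / r (t k)) * x' (t (k+1)) +
        (φ (x (ζ k)) / r (t k)) * ∫ u in t k..t (k+1), p u ≤ x' (t k) := by
  intro k
  have hab : t k ≤ t (k+1) := (ht_mono k.lt_succ_self).le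
  have hIcc : Icc (t k) (t (k+1)) ⊆ Ici (t 0) :=
    fun s hs => (ht_mono.monotone k.zero_le).trans hs.1
  have hc : 0 ≤ x (ζ k) := hx_nonneg _ (hIcc (hζ k))
  have hra : 0 < r (t k) := hr_pos _ (hIcc (left_mem_Icc.2 hab))
  have hstep : r (t (k+1)) * x' (t (k+1)) - r (t k) * x' (t k) ≤
      ∫ u in t k..t (k+1), -(p u * φ (x (ζ k))) :=
    intervalIntegral.sub_le_integral_of_hasDeriv_right_of_le hab
      ((hr_cont.mul hx'_cont).mono hIcc) (fun s hs => (hE k s hs).hasDerivWithinAt)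
      ((hp_cont.mul continuousOn_const).neg.mono hIcc).integrableOn_Icc
      fun s hs => neg_le_neg <| mul_le_of_nonneg_of_forall_pos hf_cont hφ_smooth.continuous
        hfp_pos (hIcc (Ioo_subset_Icc_self hs)) hc
  rw [intervalIntegral.integral_neg, intervalIntegral.integral_mul_const] at hstep
  rw [div_mul_eq_mul_div, div_mul_eq_mul_div, ← add_div, div_le_iff₀ hra]
  linarith

theorem stmt11
    (t ζ : ℕ → ℝ) (ht_mono : StrictMono t)
    (ht_top : Tendsto t atTop atTop)
    (hζ : ∀ k : ℕ, ζ k ∈ Icc (t k) (t (k+1)))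
    (r : ℝ → ℝ) (hr_cont : ContinuousOn r (Ici (t 0)))
    (hr_pos : ∀ s ∈ Ici (t 0), 0 < r s)
    (f : ℝ → ℝ → ℝ)
    (hf_cont : ContinuousOn (fun q : ℝ × ℝ => f q.1 q.2) ((Ici (t 0)) ×ˢ (univ : Set ℝ)))
    (hf_sign : ∀ s ∈ Ici (t 0), ∀ y : ℝ, y ≠ 0 → 0 < y * f s y)
    (x x' : ℝ → ℝ)
    (hx_deriv : ∀ s ∈ Ici (t 0), HasDerivAt x (x' s) s)
    (hx'_cont : ContinuousOn x' (Ici (t 0)))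
    (hE : ∀ k : ℕ, ∀ s ∈ Ioo (t k) (t (k+1)),
      HasDerivAt (fun u => r u * x' u) (-(f s (x (ζ k)))) s)
    (p : ℝ → ℝ) (hp_cont : ContinuousOn p (Ici (t 0)))
    (hp_nonneg : ∀ s ∈ Ici (t 0), 0 ≤ p s)
    (φ : ℝ → ℝ) (hφ_smooth : ContDiff ℝ 1 φ) (hφ_mono : Monotone φ)
    (hφ_sign : ∀ y : ℝ, y ≠ 0 → 0 < y * φ y)
    (hfp_pos : ∀ s ∈ Ici (t 0), ∀ y : ℝ, 0 < y → p s * φ y ≤ f s y)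
    (hfp_neg : ∀ s ∈ Ici (t 0), ∀ y : ℝ, y < 0 → f s y ≤ p s * φ y)
    (hx_nonneg : ∀ s ∈ Ici (t 0), 0 ≤ x s)
    (hx'_nonneg : ∀ s ∈ Ici (t 0), 0 ≤ x' s) :
    ∀ k : ℕ,
      (r (t (k+1)) / r (t k)) * x' (t (k+1)) +
        (φ (x (ζ k)) / r (t k)) * ∫ u in t k..t (k+1), p u ≤ x' (t k) :=
  stmt11_general t ζ ht_mono hζ r hr_cont hr_pos f hf_cont x x' hx'_cont hE p hp_cont φ hφ_smooth
    hfp_pos hx_nonneg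
end

section
/- Let x be a solution of (E) with x(t) ≥ 0 and x′(t) ≥ 0 for all t ≥ τ. Then for every k and every s ∈ [t_k, ζ_k], x′(s) ≥ (r(t_{k+1})/r(s))·x′(t_{k+1}) + (φ(x(ζ_k))/r(s))·∫_{ζ_k}^{t_{k+1}} p(u) du. -/
open MeasureTheory Set Filter

theorem stmt12
    (t ζ : ℕ → ℝ) (ht_mono : StrictMono t)
    (ht_top : Tendsto t atTop atTop)
    (hζ : ∀ k : ℕ, ζ k ∈ Icc (t k) (t (k+1)))
    (r : ℝ → ℝ) (hr_cont : ContinuousOn r (Ici (t 0)))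
    (hr_pos : ∀ s ∈ Ici (t 0), 0 < r s)
    (f : ℝ → ℝ → ℝ)
    (hf_cont : ContinuousOn (fun q : ℝ × ℝ => f q.1 q.2) ((Ici (t 0)) ×ˢ (univ : Set ℝ)))
    (hf_sign : ∀ s ∈ Ici (t 0), ∀ y : ℝ, y ≠ 0 → 0 < y * f s y)
    (x x' : ℝ → ℝ)
    (hx_deriv : ∀ s ∈ Ici (t 0), HasDerivAt x (x' s) s)
    (hx'_cont : ContinuousOn x' (Ici (t 0)))
    (hE : ∀ k : ℕ, ∀ s ∈ Ioo (t k) (t (k+1)),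
      HasDerivAt (fun u => r u * x' u) (-(f s (x (ζ k)))) s)
    (p : ℝ → ℝ) (hp_cont : ContinuousOn p (Ici (t 0)))
    (hp_nonneg : ∀ s ∈ Ici (t 0), 0 ≤ p s)
    (φ : ℝ → ℝ) (hφ_smooth : ContDiff ℝ 1 φ) (hφ_mono : Monotone φ)
    (hφ_sign : ∀ y : ℝ, y ≠ 0 → 0 < y * φ y)
    (hfp_pos : ∀ s ∈ Ici (t 0), ∀ y : ℝ, 0 < y → p s * φ y ≤ f s y)
    (hfp_neg : ∀ s ∈ Ici (t 0), ∀ y : ℝ, y < 0 → f s y ≤ p s * φ y)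
    (hx_nonneg : ∀ s ∈ Ici (t 0), 0 ≤ x s)
    (hx'_nonneg : ∀ s ∈ Ici (t 0), 0 ≤ x' s) :
    ∀ k : ℕ, ∀ s ∈ Icc (t k) (ζ k),
      (r (t (k+1)) / r s) * x' (t (k+1)) +
        (φ (x (ζ k)) / r s) * ∫ u in ζ k..t (k+1), p u ≤ x' s := by
  intro k s hs
  set c := x (ζ k) with hc
  have ht0k : t 0 ≤ t k := ht_mono.monotone (Nat.zero_le k)
  have hζI : ζ k ∈ Ici (t 0) := le_trans ht0k (hζ k).1
  have hs0 : t 0 ≤ s := le_trans ht0k hs.1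
  have hsζ : s ≤ ζ k := hs.2
  have hζt1 : ζ k ≤ t (k+1) := (hζ k).2
  have hst1 : s ≤ t (k+1) := hsζ.trans hζt1
  have ht10 : t 0 ≤ t (k+1) := ht_mono.monotone (Nat.zero_le (k+1))
  have hsub : Icc s (t (k+1)) ⊆ Ici (t 0) := fun u hu => hs0.trans hu.1
  have hsub2 : Icc (ζ k) (t (k+1)) ⊆ Ici (t 0) := fun u hu => hζI.trans hu.1
  have hsub3 : Icc s (ζ k) ⊆ Ici (t 0) := fun u hu => hs0.trans hu.1
  have hφ_cont : Continuous φ := hφ_smooth.continuous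
  -- φ 0 = 0
  have hφ0 : φ 0 = 0 := by
    have h1 : Tendsto φ (nhdsWithin 0 (Ioi 0)) (nhds (φ 0)) :=
      (hφ_cont.tendsto 0).mono_left nhdsWithin_le_nhds
    have h2 : Tendsto φ (nhdsWithin 0 (Iio 0)) (nhds (φ 0)) :=
      (hφ_cont.tendsto 0).mono_left nhdsWithin_le_nhds
    have hub : 0 ≤ φ 0 := by
      refine ge_of_tendsto h1 ?_
      filter_upwards [self_mem_nhdsWithin] with y hy
      have hy' : (0:ℝ) < y := hy
      nlinarith [hφ_sign y (ne_of_gt hy')]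
    have hlb : φ 0 ≤ 0 := by
      refine le_of_tendsto h2 ?_
      filter_upwards [self_mem_nhdsWithin] with y hy
      have hy' : y < (0:ℝ) := hy
      nlinarith [hφ_sign y (ne_of_lt hy')]
    linarith
  have hcnn : 0 ≤ c := hx_nonneg _ hζI
  have hφc : 0 ≤ φ c := hφ0 ▸ hφ_mono hcnn
  -- key pointwise inequality
  have hkey : ∀ u ∈ Ici (t 0), p u * φ c ≤ f u c := by
    intro u hu
    rcases lt_or_eq_of_le hcnn with hcpos | hc0
    · exact hfp_pos u hu c hcpos
    · have hfu_cont : Continuous (fun y => f u y) := by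
        have : Continuous (fun y : ℝ => ((u : ℝ), y)) :=
          continuous_const.prodMk continuous_id
        exact hf_cont.comp_continuous this (fun y => ⟨hu, mem_univ y⟩)
      have hfu0 : 0 ≤ f u 0 := by
        have htd : Tendsto (fun y => f u y) (nhdsWithin 0 (Ioi 0)) (nhds (f u 0)) :=
          (hfu_cont.tendsto 0).mono_left nhdsWithin_le_nhds
        refine ge_of_tendsto htd ?_
        filter_upwards [self_mem_nhdsWithin] with y hy
        have hy' : (0:ℝ) < y := hy
        nlinarith [hf_sign u hu y (ne_of_gt hy')]
      rw [← hc0, hφ0, mul_zero]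
      exact hfu0
  have hfnn : ∀ u ∈ Ici (t 0), 0 ≤ f u c := fun u hu =>
    le_trans (mul_nonneg (hp_nonneg u hu) hφc) (hkey u hu)
  -- continuity of u ↦ f u c on Ici (t 0)
  have hfc_cont : ContinuousOn (fun u => f u c) (Ici (t 0)) := by
    have : ContinuousOn (fun u : ℝ => ((u : ℝ), c)) (Ici (t 0)) :=
      (continuous_id.prodMk continuous_const).continuousOn
    exact hf_cont.comp this (fun u hu => ⟨hu, mem_univ c⟩)
  -- FTC on [s, t (k+1)]
  have hFTC : ∫ u in s..t (k+1), -(f u c) =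
      r (t (k+1)) * x' (t (k+1)) - r s * x' s := by
    have hcont : ContinuousOn (fun u => r u * x' u) (Icc s (t (k+1))) :=
      (hr_cont.mono hsub).mul (hx'_cont.mono hsub)
    have hderiv : ∀ u ∈ Ioo s (t (k+1)),
        HasDerivWithinAt (fun u => r u * x' u) (-(f u c)) (Ioi u) u := fun u hu =>
      (hE k u ⟨lt_of_le_of_lt hs.1 hu.1, hu.2⟩).hasDerivWithinAt
    have hint : IntervalIntegrable (fun u => -(f u c)) volume s (t (k+1)) :=
      ((hfc_cont.mono hsub).neg).intervalIntegrable_of_Icc hst1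
    exact intervalIntegral.integral_eq_sub_of_hasDeriv_right_of_le hst1 hcont hderiv hint
  have hint1 : IntervalIntegrable (fun u => f u c) volume s (ζ k) :=
    (hfc_cont.mono hsub3).intervalIntegrable_of_Icc hsζ
  have hint2 : IntervalIntegrable (fun u => f u c) volume (ζ k) (t (k+1)) :=
    (hfc_cont.mono hsub2).intervalIntegrable_of_Icc hζt1
  have hsplit : (∫ u in s..ζ k, f u c) + ∫ u in ζ k..t (k+1), f u c =
      ∫ u in s..t (k+1), f u c :=
    intervalIntegral.integral_add_adjacent_intervals hint1 hint2
  have h2 : 0 ≤ ∫ u in s..ζ k, f u c :=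
    intervalIntegral.integral_nonneg hsζ (fun u hu => hfnn u (hsub3 hu))
  have hintp : IntervalIntegrable p volume (ζ k) (t (k+1)) :=
    (hp_cont.mono hsub2).intervalIntegrable_of_Icc hζt1
  have h3 : φ c * (∫ u in ζ k..t (k+1), p u) ≤ ∫ u in ζ k..t (k+1), f u c := by
    have hmono : (∫ u in ζ k..t (k+1), p u * φ c) ≤ ∫ u in ζ k..t (k+1), f u c := by
      apply intervalIntegral.integral_mono_on hζt1 (hintp.mul_const _) hint2
      intro u hu
      exact hkey u (hsub2 hu)
    rwa [intervalIntegral.integral_mul_const, mul_comm] at hmono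
  have hIneg : (∫ u in s..t (k+1), -(f u c)) = -∫ u in s..t (k+1), f u c :=
    intervalIntegral.integral_neg
  have hrs : 0 < r s := hr_pos s hs0
  rw [div_mul_eq_mul_div, div_mul_eq_mul_div, ← add_div, div_le_iff₀ hrs]
  nlinarith [hFTC, hsplit, h2, h3, hIneg]
end

section
/- Let x be a solution of (E) with x(t) ≥ 0 and x′(t) ≥ 0 for all t ≥ τ. Then for every k, every n ∈ ℕ, and every s ∈ [t_k, ζ_k], x′(s) ≥ (1/r(s))·( φ(x(ζ_k))·∫_{ζ_k}^{t_{k+1}} p(u) du + Σ_{j=k+1}^{k+1+n} φ(x(ζ_j))·∫_{t_j}^{t_{j+1}} p(u) du ). -/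
/-! Integrating `(r x')' = -f(·, x(ζ_j))` over `[a, t_{j+1}] ⊆ [t_j, t_{j+1}]` gives
`r(a) x'(a) - r(t_{j+1}) x'(t_{j+1}) = ∫_a^{t_{j+1}} f(u, x(ζ_j)) du ≥ φ(x(ζ_j)) ∫_b^{t_{j+1}} p`
for every `b ∈ [a, t_{j+1}]`, because `f(u, y) ≥ p(u) φ(y) ≥ 0` for `y = x(ζ_j) ≥ 0`
(for `y = 0` by continuity in `y`).
Applying this with `a = s`, `b = ζ_k` on the `k`-th interval and with `a = b = t_j` on the later ones,
the right-hand sides telescope to `r(s) x'(s) - r(t_{k+n+2}) x'(t_{k+n+2}) ≤ r(s) x'(s)`, as `x' ≥ 0`. -/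

open MeasureTheory Set Filter

theorem Continuous.le_on_Ici_of_le_on_Ioi {g h : ℝ → ℝ} {a : ℝ} (hg : Continuous g)
    (hh : Continuous h) (H : ∀ y ∈ Ioi a, g y ≤ h y) : ∀ y ∈ Ici a, g y ≤ h y := by
  rw [← closure_Ioi]
  exact (isClosed_le hg hh).closure_subset_iff.2 H

theorem Finset.sum_Icc_le_sub_of_le_sub {G c : ℕ → ℝ} (hc : ∀ j, c j ≤ G j - G (j + 1))
    {m n : ℕ} (hmn : m ≤ n) : ∑ j ∈ Finset.Icc m n, c j ≤ G m - G (n + 1) :=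
  calc ∑ j ∈ Finset.Icc m n, c j ≤ ∑ j ∈ Finset.Icc m n, -(G (j + 1) - G j) :=
        Finset.sum_le_sum fun j _ => by linarith [hc j]
    _ = G m - G (n + 1) := by rw [Finset.sum_neg_distrib, Finset.sum_Icc_sub hmn]; ring

theorem mul_integral_le_sub_of_hasDerivAt_neg {G g p : ℝ → ℝ} {c a b d : ℝ} (hab : a ≤ b)
    (hbd : b ≤ d) (hG : ContinuousOn G (Icc a d)) (hG' : ∀ u ∈ Ioo a d, HasDerivAt G (-g u) u)
    (hg : ContinuousOn g (Icc a d)) (hp : ContinuousOn p (Icc a d))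
    (hpc : ∀ u ∈ Icc a d, 0 ≤ p u * c) (hpg : ∀ u ∈ Icc a d, p u * c ≤ g u) :
    c * ∫ u in b..d, p u ≤ G a - G d := by
  have had : a ≤ d := hab.trans hbd
  have hsub : Icc b d ⊆ Icc a d := Icc_subset_Icc_left hab
  have hg_int : IntervalIntegrable g volume a d := hg.intervalIntegrable_of_Icc had
  have hFTC : ∫ u in a..d, g u = G a - G d := by
    have := intervalIntegral.integral_eq_sub_of_hasDerivAt_of_le had hG hG' hg_int.neg
    rw [intervalIntegral.integral_neg] at this
    linarith
  calc c * ∫ u in b..d, p u = ∫ u in b..d, p u * c := by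
        rw [intervalIntegral.integral_mul_const, mul_comm]
    _ ≤ ∫ u in b..d, g u :=
        intervalIntegral.integral_mono_on hbd
          (((hp.mono hsub).intervalIntegrable_of_Icc hbd).mul_const c)
          ((hg.mono hsub).intervalIntegrable_of_Icc hbd) fun u hu => hpg u (hsub hu)
    _ ≤ ∫ u in a..d, g u := by
        refine intervalIntegral.integral_mono_interval hab hbd le_rfl ?_ hg_int
        filter_upwards [ae_restrict_mem measurableSet_Ioc] with u hu
        exact (hpc u (Ioc_subset_Icc_self hu)).trans (hpg u (Ioc_subset_Icc_self hu))
    _ = G a - G d := hFTC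

theorem stmt13_general
    (t ζ : ℕ → ℝ) (ht_mono : StrictMono t)
    (hζ : ∀ k : ℕ, ζ k ∈ Icc (t k) (t (k+1)))
    (r : ℝ → ℝ) (hr_cont : ContinuousOn r (Ici (t 0)))
    (hr_pos : ∀ s ∈ Ici (t 0), 0 < r s)
    (f : ℝ → ℝ → ℝ)
    (hf_cont : ContinuousOn (fun q : ℝ × ℝ => f q.1 q.2) ((Ici (t 0)) ×ˢ (univ : Set ℝ)))
    (x x' : ℝ → ℝ)
    (hx'_cont : ContinuousOn x' (Ici (t 0)))
    (hE : ∀ k : ℕ, ∀ s ∈ Ioo (t k) (t (k+1)),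
      HasDerivAt (fun u => r u * x' u) (-(f s (x (ζ k)))) s)
    (p : ℝ → ℝ) (hp_cont : ContinuousOn p (Ici (t 0)))
    (hp_nonneg : ∀ s ∈ Ici (t 0), 0 ≤ p s)
    (φ : ℝ → ℝ) (hφ_smooth : ContDiff ℝ 1 φ)
    (hφ_sign : ∀ y : ℝ, y ≠ 0 → 0 < y * φ y)
    (hfp_pos : ∀ s ∈ Ici (t 0), ∀ y : ℝ, 0 < y → p s * φ y ≤ f s y)
    (hx_nonneg : ∀ s ∈ Ici (t 0), 0 ≤ x s)
    (hx'_nonneg : ∀ s ∈ Ici (t 0), 0 ≤ x' s) :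
    ∀ k n : ℕ, ∀ s ∈ Icc (t k) (ζ k),
      (1 / r s) * (φ (x (ζ k)) * (∫ u in ζ k..t (k+1), p u) +
        ∑ j ∈ Finset.Icc (k+1) (k+1+n), φ (x (ζ j)) * ∫ u in t j..t (j+1), p u)
      ≤ x' s := by
  intro k n s hs
  have ht0 : ∀ j, t 0 ≤ t j := fun j => ht_mono.monotone (Nat.zero_le j)
  have hφ_cont : Continuous φ := hφ_smooth.continuous
  have hφ_nonneg : ∀ y ∈ Ici (0 : ℝ), 0 ≤ φ y :=
    continuous_const.le_on_Ici_of_le_on_Ioi hφ_cont fun y hy =>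
      (pos_of_mul_pos_right (hφ_sign y (ne_of_gt hy)) (le_of_lt hy)).le
  have hpφ_le_f : ∀ u ∈ Ici (t 0), ∀ y ∈ Ici (0 : ℝ), p u * φ y ≤ f u y := fun u hu =>
    (continuous_const.mul hφ_cont).le_on_Ici_of_le_on_Ioi
      (hf_cont.comp_continuous (continuous_const.prodMk continuous_id) fun _ => ⟨hu, trivial⟩)
      (hfp_pos u hu)
  have hxζ : ∀ j, 0 ≤ x (ζ j) := fun j => hx_nonneg _ ((ht0 j).trans (hζ j).1)
  have hstep : ∀ j a b, t j ≤ a → a ≤ b → b ≤ t (j + 1) →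
      φ (x (ζ j)) * ∫ u in b..t (j + 1), p u ≤ r a * x' a - r (t (j + 1)) * x' (t (j + 1)) := by
    intro j a b hja hab hbj
    have hsub : Icc a (t (j + 1)) ⊆ Ici (t 0) := fun u hu => (ht0 j).trans (hja.trans hu.1)
    exact mul_integral_le_sub_of_hasDerivAt_neg hab hbj ((hr_cont.mul hx'_cont).mono hsub)
      (fun u hu => hE j u ⟨hja.trans_lt hu.1, hu.2⟩)
      (hf_cont.comp (continuousOn_id.prodMk continuousOn_const) fun u hu => ⟨hsub hu, trivial⟩)
      (hp_cont.mono hsub)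
      (fun u hu => mul_nonneg (hp_nonneg u (hsub hu)) (hφ_nonneg _ (hxζ j)))
      (fun u hu => hpφ_le_f u (hsub hu) _ (hxζ j))
  have hfirst := hstep k s (ζ k) hs.1 hs.2 (hζ k).2
  have hrest := Finset.sum_Icc_le_sub_of_le_sub (G := fun j => r (t j) * x' (t j))
    (fun j => hstep j (t j) (t j) le_rfl le_rfl (ht_mono.monotone j.le_succ))
    (Nat.le_add_right (k + 1) n)
  have hlast : 0 ≤ r (t (k + 1 + n + 1)) * x' (t (k + 1 + n + 1)) :=
    mul_nonneg (hr_pos _ (ht0 _)).le (hx'_nonneg _ (ht0 _))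
  rw [one_div, inv_mul_le_iff₀ (hr_pos s ((ht0 k).trans hs.1))]
  linarith

theorem stmt13
    (t ζ : ℕ → ℝ) (ht_mono : StrictMono t)
    (ht_top : Tendsto t atTop atTop)
    (hζ : ∀ k : ℕ, ζ k ∈ Icc (t k) (t (k+1)))
    (r : ℝ → ℝ) (hr_cont : ContinuousOn r (Ici (t 0)))
    (hr_pos : ∀ s ∈ Ici (t 0), 0 < r s)
    (f : ℝ → ℝ → ℝ)
    (hf_cont : ContinuousOn (fun q : ℝ × ℝ => f q.1 q.2) ((Ici (t 0)) ×ˢ (univ : Set ℝ)))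
    (hf_sign : ∀ s ∈ Ici (t 0), ∀ y : ℝ, y ≠ 0 → 0 < y * f s y)
    (x x' : ℝ → ℝ)
    (hx_deriv : ∀ s ∈ Ici (t 0), HasDerivAt x (x' s) s)
    (hx'_cont : ContinuousOn x' (Ici (t 0)))
    (hE : ∀ k : ℕ, ∀ s ∈ Ioo (t k) (t (k+1)),
      HasDerivAt (fun u => r u * x' u) (-(f s (x (ζ k)))) s)
    (p : ℝ → ℝ) (hp_cont : ContinuousOn p (Ici (t 0)))
    (hp_nonneg : ∀ s ∈ Ici (t 0), 0 ≤ p s)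
    (φ : ℝ → ℝ) (hφ_smooth : ContDiff ℝ 1 φ) (hφ_mono : Monotone φ)
    (hφ_sign : ∀ y : ℝ, y ≠ 0 → 0 < y * φ y)
    (hfp_pos : ∀ s ∈ Ici (t 0), ∀ y : ℝ, 0 < y → p s * φ y ≤ f s y)
    (hfp_neg : ∀ s ∈ Ici (t 0), ∀ y : ℝ, y < 0 → f s y ≤ p s * φ y)
    (hx_nonneg : ∀ s ∈ Ici (t 0), 0 ≤ x s)
    (hx'_nonneg : ∀ s ∈ Ici (t 0), 0 ≤ x' s) :
    ∀ k n : ℕ, ∀ s ∈ Icc (t k) (ζ k),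
      (1 / r s) * (φ (x (ζ k)) * (∫ u in ζ k..t (k+1), p u) +
        ∑ j ∈ Finset.Icc (k+1) (k+1+n), φ (x (ζ j)) * ∫ u in t j..t (j+1), p u)
      ≤ x' s :=
  stmt13_general t ζ ht_mono hζ r hr_cont hr_pos f hf_cont x x' hx'_cont hE p hp_cont hp_nonneg φ
    hφ_smooth hφ_sign hfp_pos hx_nonneg hx'_nonneg
end

section
/- Let k > 0 be a real constant. Then every solution x of the DEPCAG x″(t) + k·x(γ(t)) = 0, t ≥ τ (i.e., every continuously differentiable x : [τ, ∞) → ℝ such that for every j and every t ∈ (t_j, t_{j+1}), x′ is differentiable at t with x″(t) = −k·x(ζ_j)), is oscillatory. -/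
open MeasureTheory Set Filter

/-!
Suppose a solution `x` were eventually positive. Past a grid point `t J` where positivity has set
in, `x'' = -c x(ζ_j) < 0` on every grid interval, so `x'` is nonincreasing. If `x'` ever became
negative, `x` would then decrease at least linearly and turn negative; hence `x' ≥ 0` and `x` is
nondecreasing, so `x(ζ_j) ≥ m := x(t J) > 0`. But then `x'' ≤ -c m`, so `x'` decreases at least
linearly and turns negative after all. Applying this to `-x` rules out eventual negativity.
-/

section Grid

variable {t : ℕ → ℝ} {f : ℝ → ℝ} {J : ℕ}

lemma antitoneOn_Icc_of_antitoneOn_grid (ht : Monotone t)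
    (h : ∀ j ≥ J, AntitoneOn f (Icc (t j) (t (j + 1)))) (n : ℕ) :
    AntitoneOn f (Icc (t J) (t (J + n))) := by
  induction n with
  | zero =>
    rw [Nat.add_zero, Icc_self]
    exact subsingleton_singleton.antitoneOn f
  | succ n ih =>
    rw [← Nat.add_assoc, ← Icc_union_Icc_eq_Icc (ht (Nat.le_add_right J n)) (ht (J + n).le_succ)]
    exact ih.union_right (h _ (Nat.le_add_right J n))
      (isGreatest_Icc (ht (Nat.le_add_right J n))) (isLeast_Icc (ht (J + n).le_succ))

lemma antitoneOn_Ici_of_antitoneOn_grid (ht : Monotone t) (ht_top : Tendsto t atTop atTop)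
    (h : ∀ j ≥ J, AntitoneOn f (Icc (t j) (t (j + 1)))) : AntitoneOn f (Ici (t J)) := by
  intro u hu v hv huv
  obtain ⟨m, hvm, hJm⟩ := ((ht_top.eventually_ge_atTop v).and (eventually_ge_atTop J)).exists
  obtain ⟨n, rfl⟩ := Nat.exists_eq_add_of_le hJm
  exact antitoneOn_Icc_of_antitoneOn_grid ht h n ⟨hu, huv.trans hvm⟩ ⟨hv, hvm⟩ huv

lemma antitoneOn_Ici_of_hasDerivAt_grid_nonpos (ht : Monotone t)
    (ht_top : Tendsto t atTop atTop) {f' : ℕ → ℝ} (hf : ContinuousOn f (Ici (t J)))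
    (hderiv : ∀ j ≥ J, ∀ s ∈ Ioo (t j) (t (j + 1)), HasDerivAt f (f' j) s)
    (hf' : ∀ j ≥ J, f' j ≤ 0) : AntitoneOn f (Ici (t J)) := by
  refine antitoneOn_Ici_of_antitoneOn_grid ht ht_top fun j hj => ?_
  refine antitoneOn_of_hasDerivWithinAt_nonpos (convex_Icc _ _)
    (hf.mono (Icc_subset_Ici_self.trans (Ici_subset_Ici.mpr (ht hj)))) (f' := fun _ => f' j)
    (fun s hs => ?_) fun _ _ => hf' j hj
  rw [interior_Icc] at hs ⊢
  exact (hderiv j hj s hs).hasDerivWithinAt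

end Grid

lemma tendsto_atBot_of_antitoneOn_add_mul {f : ℝ → ℝ} {a δ : ℝ} (hδ : 0 < δ)
    (h : AntitoneOn (fun s => f s + δ * s) (Ici a)) : Tendsto f atTop atBot := by
  have hlin : Tendsto (fun s => f a + δ * a - δ * s) atTop atBot :=
    tendsto_atBot_add_const_left _ _ (tendsto_neg_atTop_atBot.comp (tendsto_id.const_mul_atTop hδ))
  refine tendsto_atBot_mono' atTop ?_ hlin
  filter_upwards [eventually_ge_atTop a] with s hs
  have := h self_mem_Ici hs hs
  linarith

lemma deriv_nonneg_of_antitoneOn_deriv_of_eventually_pos {x x' : ℝ → ℝ} {a : ℝ}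
    (hx : ∀ s ∈ Ici a, HasDerivAt x (x' s) s) (hx'_anti : AntitoneOn x' (Ici a))
    (hpos : ∀ᶠ s in atTop, 0 < x s) : ∀ s ∈ Ici a, 0 ≤ x' s := by
  intro s₀ hs₀
  by_contra! hneg
  have hsub : Ici s₀ ⊆ Ici a := Ici_subset_Ici.mpr hs₀
  have hanti : AntitoneOn (fun s => x s + -x' s₀ * s) (Ici s₀) := by
    refine antitoneOn_of_hasDerivWithinAt_nonpos (convex_Ici s₀)
      (f' := fun s => x' s + -x' s₀ * 1)
      (ContinuousOn.add (fun s hs => (hx s (hsub hs)).continuousAt.continuousWithinAt)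
        (by fun_prop)) (fun s hs => ?_) fun s hs => ?_
    · rw [interior_Ici] at hs ⊢
      exact ((hx s (hsub (Ioi_subset_Ici_self hs))).add
        ((hasDerivAt_id s).const_mul _)).hasDerivWithinAt
    · rw [interior_Ici] at hs
      linarith [hx'_anti hs₀ (hsub (Ioi_subset_Ici_self hs)) hs.le]
  have := (tendsto_atBot_of_antitoneOn_add_mul (neg_pos.mpr hneg) hanti).eventually_lt_atBot 0
  obtain ⟨s, hs, hs'⟩ := (hpos.and this).exists
  exact lt_asymm hs hs'

lemma not_eventually_pos_of_depcag {t ζ : ℕ → ℝ} (ht : Monotone t)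
    (ht_top : Tendsto t atTop atTop) (hζ : ∀ k, t k ≤ ζ k) {c : ℝ} (hc : 0 < c)
    {x x' : ℝ → ℝ} (hx : ∀ s ∈ Ici (t 0), HasDerivAt x (x' s) s)
    (hx' : ContinuousOn x' (Ici (t 0)))
    (hE : ∀ j : ℕ, ∀ s ∈ Ioo (t j) (t (j + 1)), HasDerivAt x' (-(c * x (ζ j))) s) :
    ¬∀ᶠ s in atTop, 0 < x s := by
  intro hpos
  obtain ⟨T, hT⟩ := eventually_atTop.mp hpos
  obtain ⟨J, hTJ⟩ := (ht_top.eventually_ge_atTop T).exists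
  have hJ : Ici (t J) ⊆ Ici (t 0) := Ici_subset_Ici.mpr (ht J.zero_le)
  have hζJ : ∀ j ≥ J, t J ≤ ζ j := fun j hj => (ht hj).trans (hζ j)
  have hx_cont : ContinuousOn x (Ici (t 0)) :=
    fun s hs => (hx s hs).continuousAt.continuousWithinAt
  have hx'_anti : AntitoneOn x' (Ici (t J)) :=
    antitoneOn_Ici_of_hasDerivAt_grid_nonpos ht ht_top (hx'.mono hJ) (fun j _ => hE j)
      fun j hj => neg_nonpos.mpr (mul_pos hc (hT _ (hTJ.trans (hζJ j hj)))).le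
  have hx'_nonneg : ∀ s ∈ Ici (t J), 0 ≤ x' s :=
    deriv_nonneg_of_antitoneOn_deriv_of_eventually_pos (fun s hs => hx s (hJ hs)) hx'_anti hpos
  have hx_mono : MonotoneOn x (Ici (t J)) := by
    refine monotoneOn_of_hasDerivWithinAt_nonneg (convex_Ici _) (hx_cont.mono hJ) (f' := x')
      (fun s hs => ?_) fun s hs => ?_
    · rw [interior_Ici] at hs ⊢
      exact (hx s (hJ (Ioi_subset_Ici_self hs))).hasDerivWithinAt
    · rw [interior_Ici] at hs
      exact hx'_nonneg s (Ioi_subset_Ici_self hs)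
  set m := x (t J)
  have hm : 0 < c * m := mul_pos hc (hT _ hTJ)
  have hanti : AntitoneOn (fun s => x' s + c * m * s) (Ici (t J)) := by
    refine antitoneOn_Ici_of_hasDerivAt_grid_nonpos ht ht_top
      (f' := fun j => -(c * x (ζ j)) + c * m * 1)
      ((hx'.mono hJ).add (by fun_prop))
      (fun j _ s hs => (hE j s hs).add ((hasDerivAt_id s).const_mul _)) fun j hj => ?_
    have := hx_mono self_mem_Ici (hζJ j hj) (hζJ j hj)
    nlinarith
  have := (tendsto_atBot_of_antitoneOn_add_mul hm hanti).eventually_lt_atBot 0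
  obtain ⟨s, hs, hs'⟩ := ((eventually_ge_atTop (t J)).and this).exists
  exact (hx'_nonneg s hs).not_gt hs'

theorem stmt16
    (t ζ : ℕ → ℝ) (ht_mono : StrictMono t)
    (ht_top : Tendsto t atTop atTop)
    (hζ : ∀ k : ℕ, ζ k ∈ Icc (t k) (t (k+1)))
    (c : ℝ) (hc : 0 < c)
    (x x' : ℝ → ℝ)
    (hx_deriv : ∀ s ∈ Ici (t 0), HasDerivAt x (x' s) s)
    (hx'_cont : ContinuousOn x' (Ici (t 0)))
    (hE : ∀ j : ℕ, ∀ s ∈ Ioo (t j) (t (j+1)),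
      HasDerivAt x' (-(c * x (ζ j))) s) :
    ∃ a b : ℕ → ℝ, Tendsto a atTop atTop ∧ Tendsto b atTop atTop ∧
      ∀ n : ℕ, x (a n) ≤ 0 ∧ 0 ≤ x (b n) := by
  have hζ_ge : ∀ k, t k ≤ ζ k := fun k => (hζ k).1
  have not_pos := not_eventually_pos_of_depcag ht_mono.monotone ht_top hζ_ge hc hx_deriv
    hx'_cont hE
  have not_neg := not_eventually_pos_of_depcag ht_mono.monotone ht_top hζ_ge hc
    (x := -x) (x' := -x') (fun s hs => (hx_deriv s hs).neg) hx'_cont.neg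
    fun j s hs => by simpa only [Pi.neg_apply, mul_neg, neg_neg] using (hE j s hs).neg
  obtain ⟨a, ha, hxa⟩ := exists_seq_forall_of_frequently (not_eventually.mp not_pos)
  obtain ⟨b, hb, hxb⟩ := exists_seq_forall_of_frequently (not_eventually.mp not_neg)
  exact ⟨a, b, ha, hb, fun n => ⟨not_lt.mp (hxa n), by simpa using hxb n⟩⟩
end

section
/- Let a : ℕ → ℝ be defined by a(0) = 1, a(1) = 0, and a(n+2) = a(n+1) − 2·a(n). Then the sequence a is oscillatory: for every N ∈ ℕ there exist m, n ≥ N with a(m) ≤ 0 ≤ a(n); equivalently, a is neither eventually positive nor eventually negative. -/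
open MeasureTheory Set Filter

theorem stmt19
    (a : ℕ → ℝ) (ha0 : a 0 = 1) (ha1 : a 1 = 0)
    (harec : ∀ n : ℕ, a (n+2) = a (n+1) - 2 * a n) :
    ∀ N : ℕ, ∃ m ≥ N, ∃ n ≥ N, a m ≤ 0 ∧ 0 ≤ a n := by
  intro N
  have hpos : ∀ n : ℕ, a n ≤ 0 ∨ a (n+1) ≤ 0 ∨ a (n+2) ≤ 0 ∨ a (n+3) ≤ 0 := by
    intro n
    by_contra h
    push_neg at h
    obtain ⟨h0, h1, h2, h3⟩ := h
    have e2 := harec n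
    have e3 := harec (n+1)
    have : n + 1 + 2 = n + 3 := by ring
    rw [this] at e3
    nlinarith
  have hneg : ∀ n : ℕ, 0 ≤ a n ∨ 0 ≤ a (n+1) ∨ 0 ≤ a (n+2) ∨ 0 ≤ a (n+3) := by
    intro n
    by_contra h
    push_neg at h
    obtain ⟨h0, h1, h2, h3⟩ := h
    have e2 := harec n
    have e3 := harec (n+1)
    have : n + 1 + 2 = n + 3 := by ring
    rw [this] at e3
    nlinarith
  obtain ⟨m, hm, hma⟩ : ∃ m ≥ N, a m ≤ 0 := by
    rcases hpos N with h | h | h | h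
    · exact ⟨N, le_refl N, h⟩
    · exact ⟨N + 1, by omega, h⟩
    · exact ⟨N + 2, by omega, h⟩
    · exact ⟨N + 3, by omega, h⟩
  obtain ⟨n, hn, hna⟩ : ∃ n ≥ N, 0 ≤ a n := by
    rcases hneg N with h | h | h | h
    · exact ⟨N, le_refl N, h⟩
    · exact ⟨N + 1, by omega, h⟩
    · exact ⟨N + 2, by omega, h⟩
    · exact ⟨N + 3, by omega, h⟩
  exact ⟨m, hm, n, hn, hma, hna⟩
end
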